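/- arXiv:1301.1205 — 6 statements merged into one kernel-verified Lean document; each statement's English description precedes it below -/
import Mathlib

section
/- The map sending a permutation π ∈ Sₙ and an involution s ∈ Sₙ (s² = e) to (-1)^{i(π,s)} · v_{πsπ⁻¹}, where i(π,s) is the number of pairs (i,j) with 1 ≤ i < j ≤ n, s(i) = j and π(i) > π(j), defines a linear action of Sₙ on the free complex vector space with basis indexed by the involutions of Sₙ; that is, π·(σ·v_s) = (πσ)·v_s for all π, σ ∈ Sₙ and all involutions s. -/
/-!
The sign `(-1)^{i(π,s)}` is the product, over the 2-cycles `{i, s i}` of `s`, of the sign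
`ε(π; i, j) = ±1` recording whether `π` inverts the pair. This pair sign is symmetric in
`i, j` and satisfies the cocycle rule `ε(πσ; i, j) = ε(π; σ i, σ j) ε(σ; i, j)`. The 2-cycles
of `σ s σ⁻¹` are the images under `σ` of those of `s`, so multiplying the cocycle rule over
the 2-cycles of `s` gives `(-1)^{i(π, σsσ⁻¹)} (-1)^{i(σ, s)} = (-1)^{i(πσ, s)}`, which together
with `π(σsσ⁻¹)π⁻¹ = (πσ)s(πσ)⁻¹` is the claim.
-/

open scoped Classical
open Relation
noncomputable section

/-- Vertices of a diagram: `inl` = unprimed points `n̄`, `inr` = primed points `n̄'`. -/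
abbrev DVert (n : ℕ) := Fin n ⊕ Fin n

/-- Tripled vertex set used for gluing: bottom (unprimed of the right factor),
middle (identified vertices), top (primed of the left factor). -/
abbrev TVert (n : ℕ) := Fin n ⊕ (Fin n ⊕ Fin n)

def embBot (n : ℕ) : DVert n → TVert n := Sum.elim Sum.inl (fun i => Sum.inr (Sum.inl i))
def embTop (n : ℕ) : DVert n → TVert n :=
  Sum.elim (fun i => Sum.inr (Sum.inl i)) (fun i => Sum.inr (Sum.inr i))
def embOut (n : ℕ) : DVert n → TVert n := Sum.elim Sum.inl (fun i => Sum.inr (Sum.inr i))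

/-- The minimal equivalence relation `χ` on the tripled vertex set containing
(the embedded copies of) `τ` and `ρ`. -/
def glue (n : ℕ) (τ ρ : Setoid (DVert n)) : Setoid (TVert n) :=
  EqvGen.setoid (fun x y =>
    (∃ a b, ρ.r a b ∧ x = embBot n a ∧ y = embBot n b) ∨
    (∃ a b, τ.r a b ∧ x = embTop n a ∧ y = embTop n b))

/-- Composition `τ ∘ ρ` in the partition monoid: glue and restrict to the outer vertices. -/
def pcomp (n : ℕ) (τ ρ : Setoid (DVert n)) : Setoid (DVert n) where
  r x y := (glue n τ ρ).r (embOut n x) (embOut n y)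
  iseqv := ⟨fun _ => (glue n τ ρ).iseqv.refl _, fun h => (glue n τ ρ).iseqv.symm h,
    fun h₁ h₂ => (glue n τ ρ).iseqv.trans h₁ h₂⟩

/-- A middle vertex of the tripled vertex set. -/
def isMiddle {n : ℕ} (x : TVert n) : Prop := ∃ i, x = Sum.inr (Sum.inl i)

/-- `c(τ,ρ)`: the number of classes of the glued relation contained in the middle row. -/
def ccount (n : ℕ) (τ ρ : Setoid (DVert n)) : ℕ :=
  {C ∈ (glue n τ ρ).classes | ∀ x ∈ C, isMiddle x}.ncard

/-- A propagating part: one meeting both the unprimed and the primed vertices. -/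
def IsPropagating {n : ℕ} (C : Set (DVert n)) : Prop :=
  (∃ i, Sum.inl i ∈ C) ∧ (∃ i, Sum.inr i ∈ C)

/-- The rank `r(σ)`: the number of propagating parts of `σ`. -/
def prank (n : ℕ) (σ : Setoid (DVert n)) : ℕ :=
  {C ∈ σ.classes | IsPropagating C}.ncard

/-- The anti-involution `⋆` swapping primed and unprimed vertices. -/
def pstar (n : ℕ) (σ : Setoid (DVert n)) : Setoid (DVert n) where
  r x y := σ.r x.swap y.swap
  iseqv := ⟨fun _ => σ.iseqv.refl _, fun h => σ.iseqv.symm h,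
    fun h₁ h₂ => σ.iseqv.trans h₁ h₂⟩

/-- Minimal unprimed vertex of a part. -/
def minL {n : ℕ} (C : Set (DVert n)) : ℕ :=
  sInf {m : ℕ | ∃ j : Fin n, (j : ℕ) = m ∧ Sum.inl j ∈ C}

/-- Minimal primed vertex of a part. -/
def minR {n : ℕ} (C : Set (DVert n)) : ℕ :=
  sInf {m : ℕ | ∃ j : Fin n, (j : ℕ) = m ∧ Sum.inr j ∈ C}

/-- Position of a propagating part `C` of `σ` in the ordering (by minimal elements) of the
intersections of the propagating parts with the unprimed vertices. -/
def posL (n : ℕ) (σ : Setoid (DVert n)) (C : Set (DVert n)) : ℕ :=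
  {D ∈ σ.classes | IsPropagating D ∧ minL D < minL C}.ncard

/-- Position of a propagating part `C` of `σ` in the ordering (by minimal elements) of the
intersections of the propagating parts with the primed vertices. -/
def posR (n : ℕ) (σ : Setoid (DVert n)) (C : Set (DVert n)) : ℕ :=
  {D ∈ σ.classes | IsPropagating D ∧ minR D < minR C}.ncard

/-- The permutation `π_σ ∈ S_k` recording how propagating lines connect the two sides of `σ`
(for a diagram of rank `k`): the unique permutation sending the position of a propagating part
on the unprimed side to its position on the primed side. -/
def permAt (n k : ℕ) (σ : Setoid (DVert n)) : Equiv.Perm (Fin k) :=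
  Classical.epsilon (fun π : Equiv.Perm (Fin k) =>
    ∀ C ∈ σ.classes, IsPropagating C → ∀ h : posL n σ C < k,
      ((π ⟨posL n σ C, h⟩ : Fin k) : ℕ) = posR n σ C)

/-- The product of the partition algebra `𝐏ₙ(δ)` on the free vector space on diagrams. -/
def pmul (n : ℕ) (δ : ℂ) (f g : Setoid (DVert n) →₀ ℂ) : Setoid (DVert n) →₀ ℂ :=
  f.sum fun τ a => g.sum fun ρ b =>
    Finsupp.single (pcomp n τ ρ) (δ ^ ccount n τ ρ * (a * b))

/-- `i(π,s)`: the number of pairs `i < j` with `s i = j` and `π i > π j`. -/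
def icount (n : ℕ) (π s : Equiv.Perm (Fin n)) : ℕ :=
  (Finset.univ.filter fun p : Fin n × Fin n => p.1 < p.2 ∧ s p.1 = p.2 ∧ π p.2 < π p.1).card


/-- The set of involutions in `Sₙ` (elements with `s² = e`). -/
def Invol (n : ℕ) := {s : Equiv.Perm (Fin n) // s * s = 1}

/-- Conjugation of an involution by a permutation. -/
def conjInvol (n : ℕ) (π : Equiv.Perm (Fin n)) (s : Invol n) : Invol n :=
  ⟨π * s.1 * π⁻¹, by
    have h := s.2
    have e : π * s.1 * π⁻¹ * (π * s.1 * π⁻¹) = π * (s.1 * s.1) * π⁻¹ := by group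
    rw [e, h]; group⟩

/-- The action of `π ∈ Sₙ` on the free vector space `ℂ[ℐₙ]`, sending
`v_s` to `(-1)^{i(π,s)} v_{πsπ⁻¹}` (extended linearly). -/
def modelAct (n : ℕ) (π : Equiv.Perm (Fin n)) (f : Invol n →₀ ℂ) : Invol n →₀ ℂ :=
  f.sum fun s c => Finsupp.single (conjInvol n π s) ((-1 : ℂ) ^ icount n π s.1 * c)

namespace Equiv.Perm

variable {α R : Type*} [LinearOrder α] [CommRing R]

def inversionSign (π : Perm α) (i j : α) : R := if (π i < π j ↔ i < j) then 1 else -1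

theorem inversionSign_comm (π : Perm α) (i j : α) :
    (inversionSign π i j : R) = inversionSign π j i := by
  unfold inversionSign
  grind [π.injective.ne_iff]

theorem inversionSign_mul (π σ : Perm α) (i j : α) :
    (inversionSign (π * σ) i j : R) = inversionSign π (σ i) (σ j) * inversionSign σ i j := by
  unfold inversionSign
  simp only [coe_mul, Function.comp_apply]
  by_cases hπ : π (σ i) < π (σ j) <;> by_cases hσ : σ i < σ j <;> by_cases h : i < j <;>
    simp [hπ, hσ, h]

variable [Fintype α] {M : Type*} [CommMonoid M]

theorem prod_filter_apply_lt_eq_prod_filter_lt (s σ : Perm α) (hs : Function.Involutive s)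
    (g : α → M) (hg : ∀ i, g (s i) = g i) :
    ∏ i with σ i < σ (s i), g i = ∏ i with i < s i, g i := by
  -- each side picks one endpoint of every 2-cycle of `s`, and `g` cannot tell which
  refine Finset.prod_nbij' (fun i => if i < s i then i else s i)
    (fun i => if σ i < σ (s i) then i else s i) ?_ ?_ ?_ ?_ ?_
  all_goals
    intro i hi
    simp only [Finset.mem_filter, Finset.mem_univ, true_and] at hi ⊢
    have hss : s (s i) = i := hs i
    grind [σ.injective.ne_iff]

theorem prod_filter_lt_conj_apply (s σ : Perm α) (hs : Function.Involutive s)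
    (f : α → α → M) (hf : ∀ i j, f i j = f j i) :
    ∏ x with x < (σ * s * σ⁻¹) x, f x ((σ * s * σ⁻¹) x) =
      ∏ i with i < s i, f (σ i) (σ (s i)) := by
  rw [← prod_filter_apply_lt_eq_prod_filter_lt s σ hs _ (fun i => by rw [hs i, hf])]
  symm
  refine Finset.prod_equiv σ (fun i => ?_) (by simp)
  rw [Finset.mem_filter, Finset.mem_filter]
  simp

end Equiv.Perm

open Equiv.Perm

theorem icount_eq_card_filter (n : ℕ) (π s : Equiv.Perm (Fin n)) :
    icount n π s = (Finset.univ.filter fun i => i < s i ∧ π (s i) < π i).card := by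
  refine Finset.card_nbij' Prod.fst (fun i => (i, s i)) ?_ ?_ ?_ ?_ <;> intro x hx <;>
    grind [Finset.coe_filter]

theorem neg_one_pow_icount {R : Type*} [CommRing R] (n : ℕ) (π s : Equiv.Perm (Fin n)) :
    (-1 : R) ^ icount n π s = ∏ i with i < s i, inversionSign π i (s i) := by
  calc (-1 : R) ^ icount n π s
      = ∏ i with i < s i ∧ π (s i) < π i, (-1 : R) := by
        rw [Finset.prod_const, icount_eq_card_filter]
    _ = ∏ i with i < s i, if π (s i) < π i then -1 else 1 := by
        rw [← Finset.filter_filter, Finset.prod_filter]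
    _ = ∏ i with i < s i, inversionSign π i (s i) := by
        refine Finset.prod_congr rfl fun i hi => ?_
        have hπ : π i ≠ π (s i) := π.injective.ne (Finset.mem_filter.mp hi).2.ne
        simp only [inversionSign, (Finset.mem_filter.mp hi).2, iff_true]
        split_ifs <;> grind

theorem neg_one_pow_icount_conj_mul {R : Type*} [CommRing R] (n : ℕ)
    (π σ s : Equiv.Perm (Fin n)) (hs : s * s = 1) :
    (-1 : R) ^ icount n π (σ * s * σ⁻¹) * (-1) ^ icount n σ s = (-1) ^ icount n (π * σ) s := by
  have hs' : Function.Involutive s := fun i => by simpa using congr($hs i)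
  simp only [neg_one_pow_icount, prod_filter_lt_conj_apply s σ hs' (inversionSign π)
    (inversionSign_comm π), ← Finset.prod_mul_distrib, inversionSign_mul]

theorem conjInvol_mul (n : ℕ) (π σ : Equiv.Perm (Fin n)) (s : Invol n) :
    conjInvol n π (conjInvol n σ s) = conjInvol n (π * σ) s :=
  Subtype.ext (by simp only [conjInvol]; group)

theorem modelAct_single (n : ℕ) (π : Equiv.Perm (Fin n)) (s : Invol n) (c : ℂ) :
    modelAct n π (Finsupp.single s c) =
      Finsupp.single (conjInvol n π s) ((-1 : ℂ) ^ icount n π s.1 * c) :=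
  Finsupp.sum_single_index (by simp)

/-- the formula `π · v_s = (-1)^{i(π,s)} v_{πsπ⁻¹}` defines an action:
`π · (σ · v_s) = (πσ) · v_s` for all `π, σ ∈ Sₙ` and all involutions `s`. -/
theorem gelfand_model_action (n : ℕ) (π σ : Equiv.Perm (Fin n)) (s : Invol n) :
    modelAct n π (modelAct n σ (Finsupp.single s 1)) =
      modelAct n (π * σ) (Finsupp.single s 1) := by
  rw [modelAct_single, modelAct_single, modelAct_single, conjInvol_mul, ← mul_assoc]
  exact congrArg _ (by rw [conjInvol, neg_one_pow_icount_conj_mul n π σ s.1 s.2])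

end
end

section
/- For all π, σ ∈ Sₙ and every involution s ∈ Sₙ, the sign counts satisfy i(πσ, s) ≡ i(π, σ s σ⁻¹) + i(σ, s) (mod 2), where i(π,s) is the number of pairs 1 ≤ i < j ≤ n with s(i) = j and π(i) > π(j). -/
/-! `i(π, s)` is the number of `2`-cycles `{x, s x}` of `s` whose order `π` reverses. Now `πσ`
reverses `{x, s x}` iff exactly one of `σ` reversing it and `π` reversing its image
`{σ x, σ (s x)}` holds, and these images are exactly the `2`-cycles of `σ s σ⁻¹`. -/

open scoped Classical
open Relation
noncomputable section

open Equiv Finset Function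

namespace Sym2

variable {α β γ : Type*} [LinearOrder α] [LinearOrder β] [LinearOrder γ]

def IsInversion (f : α → β) : Sym2 α → Prop :=
  Sym2.lift ⟨fun x y => (x < y ∧ f y < f x) ∨ (y < x ∧ f x < f y), fun _ _ => propext or_comm⟩

@[simp]
theorem isInversion_mk (f : α → β) (x y : α) :
    IsInversion f s(x, y) ↔ (x < y ∧ f y < f x) ∨ (y < x ∧ f x < f y) := Iff.rfl

theorem isInversion_comp {f : α → β} {g : β → γ} (hf : Injective f) (hg : Injective g)
    {e : Sym2 α} (he : ¬e.IsDiag) :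
    IsInversion (g ∘ f) e ↔ Xor (IsInversion f e) (IsInversion g (e.map f)) := by
  induction e using Sym2.ind with
  | h x y =>
    have hxy : x ≠ y := he
    have hfxy : f x ≠ f y := hf.ne hxy
    have hgfxy : g (f x) ≠ g (f y) := hg.ne hfxy
    simp only [isInversion_mk, map_mk, comp_apply, Xor]
    rcases hxy.lt_or_gt with h | h <;> rcases hfxy.lt_or_gt with h' | h' <;>
      rcases hgfxy.lt_or_gt with h'' | h'' <;>
      simp [h, h', h'', h.not_gt, h'.not_gt, h''.not_gt]

end Sym2

theorem Finset.card_filter_xor_modEq {ι : Type*} (S : Finset ι) (p q : ι → Prop)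
    [DecidablePred p] [DecidablePred q] :
    #{x ∈ S | Xor (p x) (q x)} ≡ #{x ∈ S | p x} + #{x ∈ S | q x} [MOD 2] := by
  rw [← ZMod.natCast_eq_natCast_iff]
  push_cast
  simp only [natCast_card_filter, ← sum_add_distrib]
  refine sum_congr rfl fun x _ => ?_
  by_cases hp : p x <;> by_cases hq : q x <;> simp [hp, hq, Xor, CharTwo.add_self_eq_zero]

namespace Equiv.Perm

variable {α : Type*} [DecidableEq α] [Fintype α]

/-- For an involution `s`, the `2`-cycles of `s`. -/
def swapPairs (s : Perm α) : Finset (Sym2 α) :=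
  (univ.filter fun x => s x ≠ x).image fun x => s(x, s x)

theorem mk_mem_swapPairs {s : Perm α} {x y : α} :
    s(x, y) ∈ s.swapPairs ↔ x ≠ y ∧ (s x = y ∨ s y = x) := by
  simp only [swapPairs, mem_image, mem_filter, mem_univ, true_and, Sym2.eq_iff]
  constructor
  · rintro ⟨z, hz, ⟨rfl, rfl⟩ | ⟨rfl, rfl⟩⟩
    exacts [⟨hz.symm, .inl rfl⟩, ⟨hz, .inr rfl⟩]
  · rintro ⟨hxy, rfl | rfl⟩
    exacts [⟨x, hxy.symm, .inl ⟨rfl, rfl⟩⟩, ⟨y, hxy, .inr ⟨rfl, rfl⟩⟩]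

theorem not_isDiag_of_mem_swapPairs {s : Perm α} {e : Sym2 α} (he : e ∈ s.swapPairs) :
    ¬e.IsDiag := by
  induction e using Sym2.ind with
  | h x y => exact (mk_mem_swapPairs.mp he).1

theorem swapPairs_conj (σ s : Perm α) :
    (σ * s * σ⁻¹).swapPairs = s.swapPairs.image (Sym2.map σ) := by
  ext e
  simp only [swapPairs, mem_image, mem_filter, mem_univ, true_and, exists_exists_and_eq_and,
    Sym2.map_mk]
  constructor
  · rintro ⟨y, hy, rfl⟩
    refine ⟨σ⁻¹ y, ?_, ?_⟩
    · simpa [← Equiv.eq_symm_apply] using hy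
    · simp
  · rintro ⟨x, hx, rfl⟩
    exact ⟨σ x, by simpa using hx, by simp⟩

end Equiv.Perm

theorem icount_eq_card_isInversion {n : ℕ} (π s : Perm (Fin n)) (hs : Involutive s) :
    icount n π s = #{e ∈ s.swapPairs | e.IsInversion π} := by
  unfold icount
  refine card_bij (fun p _ => s(p.1, p.2)) ?_ ?_ ?_
  · rintro ⟨x, y⟩ hp
    simp only [mem_filter, mem_univ, true_and] at hp ⊢
    obtain ⟨hxy, hsx, hπ⟩ := hp
    exact ⟨Perm.mk_mem_swapPairs.mpr ⟨hxy.ne, .inl hsx⟩, .inl ⟨hxy, hπ⟩⟩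
  · rintro ⟨x, y⟩ hp ⟨x', y'⟩ hp' h
    simp only [mem_filter, mem_univ, true_and] at hp hp'
    rcases Sym2.eq_iff.mp h with ⟨rfl, rfl⟩ | ⟨rfl, rfl⟩
    · rfl
    · exact absurd hp.1 hp'.1.not_gt
  · intro e he
    induction e using Sym2.ind with
    | h x y =>
      simp only [mem_filter, Perm.mk_mem_swapPairs, Sym2.isInversion_mk] at he
      obtain ⟨⟨-, hs'⟩, hπ⟩ := he
      obtain rfl : s x = y := hs'.elim id fun h => h ▸ hs y
      rcases hπ with h | h
      · exact ⟨(x, s x), by simpa using h, rfl⟩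
      · exact ⟨(s x, x), by simpa [hs x] using h, Sym2.eq_swap⟩

/-- the sign counts satisfy
`i(πσ, s) ≡ i(π, σsσ⁻¹) + i(σ, s) (mod 2)` for all `π, σ ∈ Sₙ` and involutions `s`. -/
theorem icount_cocycle (n : ℕ) (π σ s : Equiv.Perm (Fin n)) (hs : s * s = 1) :
    icount n (π * σ) s ≡ icount n π (σ * s * σ⁻¹) + icount n σ s [MOD 2] := by
  have hinv : Involutive s := fun x => Perm.ext_iff.mp hs x
  have hconj : Involutive (σ * s * σ⁻¹) := fun x => by simp [hinv _]
  rw [icount_eq_card_isInversion _ _ hinv, icount_eq_card_isInversion _ _ hinv,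
    icount_eq_card_isInversion _ _ hconj, Perm.swapPairs_conj, filter_image,
    card_image_of_injective _ (Sym2.map.injective σ.injective), Perm.coe_mul,
    filter_congr fun e he =>
      Sym2.isInversion_comp σ.injective π.injective (Perm.not_isDiag_of_mem_swapPairs he),
    add_comm]
  exact card_filter_xor_modEq _ _ _

end
end

section
/- The composition operation ∘ on the set Pₙ of equivalence relations (partitions) of the 2n-element set n̄ ∪ n̄' is associative: (τ ∘ ρ) ∘ σ = τ ∘ (ρ ∘ σ) for all τ, ρ, σ ∈ Pₙ. -/
open scoped Classical
open Relation
noncomputable section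

/-!
Both composites are the restriction to the outer rows of the equivalence relation generated by
`σ`, `ρ`, `τ` on four rows of vertices. The gluing step behind this: if `P` is an equivalence on
`γ` whose pullback along `f : α → γ` lies below `E`, then the join of `P` with the image of `E`
still pulls back to `E`, because a `P`-step between two points of the image of `f` is already an
`E`-step, so a chain of alternating `P`- and `E`-steps collapses to the shape `P, E, P`.
-/

namespace Setoid

variable {α β γ : Type*}

theorem map_le_iff {r : Setoid α} {f : α → β} {s : Setoid β} : r.map f ≤ s ↔ r ≤ s.comap f :=
  ⟨fun h => le_comap_map.trans fun _ _ hxy => h hxy,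
    fun h => eqvGen_le fun _ _ ⟨_, _, hab, ha, hb⟩ => ha ▸ hb ▸ h hab⟩

theorem gc_map_comap (f : α → β) : GaloisConnection (map · f) (comap f) :=
  fun _ _ => map_le_iff

theorem map_sup (r s : Setoid α) (f : α → β) : (r ⊔ s).map f = r.map f ⊔ s.map f :=
  (gc_map_comap f).l_sup

theorem map_map (r : Setoid α) (f : α → β) (g : β → γ) : (r.map f).map g = r.map (g ∘ f) :=
  ((gc_map_comap f).compose (gc_map_comap g)).l_unique (gc_map_comap (g ∘ f)) fun _ => rfl

theorem map_comap_le (r : Setoid β) (f : α → β) : (r.comap f).map f ≤ r :=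
  map_le_iff.2 le_rfl

theorem comap_sup_map_eq {f : α → γ} {E : Setoid α} {P : Setoid γ} (h : P.comap f ≤ E) :
    (E.map f ⊔ P).comap f = E := by
  have hker : ker f ≤ E := fun a a' ha => h (show P (f a) (f a') from ker_def.1 ha ▸ P.refl _)
  have hQ : ∀ {x y}, E.map f x y ↔ (∃ a a', E a a' ∧ f a = x ∧ f a' = y) ∨ x = y := by
    intro x y; rw [coe_map_of_ker_le E f hker]; rfl
  have swap : ∀ {x y z w}, E.map f x y → P y z → E.map f z w →
      ∃ m m', P x m ∧ E.map f m m' ∧ P m' w := by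
    intro x y z w hxy hyz hzw
    rcases hQ.1 hxy with ⟨a, a', haa, rfl, rfl⟩ | rfl
    · rcases hQ.1 hzw with ⟨b, b', hbb, rfl, rfl⟩ | rfl
      · exact ⟨f a, f b', P.refl _,
          hQ.2 (.inl ⟨a, b', E.trans haa (E.trans (h hyz) hbb), rfl, rfl⟩), P.refl _⟩
      · exact ⟨f a, f a', P.refl _, hxy, hyz⟩
    · exact ⟨z, w, hyz, hzw, P.refl _⟩
  let R : Setoid γ :=
    { r := fun x y => ∃ m m', P x m ∧ E.map f m m' ∧ P m' y
      iseqv :=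
        { refl := fun x => ⟨x, x, P.refl _, (E.map f).refl _, P.refl _⟩
          symm := fun ⟨m, m', h₁, h₂, h₃⟩ => ⟨m', m, P.symm h₃, (E.map f).symm h₂, P.symm h₁⟩
          trans := fun ⟨_, _, h₁, h₂, h₃⟩ ⟨_, _, h₄, h₅, h₆⟩ =>
            let ⟨k, k', h₇, h₈, h₉⟩ := swap h₂ (P.trans h₃ h₄) h₅
            ⟨k, k', P.trans h₁ h₇, h₈, P.trans h₉ h₆⟩ } }
  have hR : E.map f ⊔ P ≤ R := sup_le
    (map_le_iff.2 fun a a' haa => ⟨f a, f a', P.refl _, le_comap_map haa, P.refl _⟩)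
    (fun x y hxy => ⟨y, y, hxy, (E.map f).refl _, P.refl _⟩)
  refine le_antisymm (fun a a' haa => ?_) ((gc_map_comap f).le_u le_sup_left)
  obtain ⟨m, m', h₁, h₂, h₃⟩ := hR haa
  rcases hQ.1 h₂ with ⟨b, b', hbb, rfl, rfl⟩ | rfl
  · exact E.trans (h h₁) (E.trans hbb (h h₃))
  · exact h (P.trans h₁ h₃)

theorem comap_map_le_of_injective {f : α → γ} {g : β → γ} (hf : f.Injective) (hg : g.Injective)
    {E : Setoid α} {G : Setoid β} (h : ∀ a a' b b', f a = g b → f a' = g b' → G b b' → E a a') :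
    (G.map g).comap f ≤ E := by
  intro a a' haa
  rw [comap_rel, coe_map_of_ker_le G g (ker_eq_bot_iff.2 hg ▸ bot_le)] at haa
  rcases haa with ⟨b, b', hbb, hb, hb'⟩ | haa
  · exact h a a' b b' hb.symm hb'.symm hbb
  · exact hf haa ▸ E.refl a

end Setoid

section Associativity

variable {n : ℕ}

/-- Four rows of `n` points, in which `σ`, `ρ`, `τ` occupy rows 0-1, 1-2, 2-3. -/
abbrev QVert (n : ℕ) := Fin n ⊕ (Fin n ⊕ (Fin n ⊕ Fin n))

def rows01 (n : ℕ) : DVert n → QVert n := Sum.elim Sum.inl (Sum.inr ∘ Sum.inl)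
def rows12 (n : ℕ) : DVert n → QVert n :=
  Sum.elim (Sum.inr ∘ Sum.inl) (Sum.inr ∘ Sum.inr ∘ Sum.inl)
def rows23 (n : ℕ) : DVert n → QVert n :=
  Sum.elim (Sum.inr ∘ Sum.inr ∘ Sum.inl) (Sum.inr ∘ Sum.inr ∘ Sum.inr)

def rows012 (n : ℕ) : TVert n → QVert n :=
  Sum.elim Sum.inl (Sum.elim (Sum.inr ∘ Sum.inl) (Sum.inr ∘ Sum.inr ∘ Sum.inl))
def rows013 (n : ℕ) : TVert n → QVert n :=
  Sum.elim Sum.inl (Sum.elim (Sum.inr ∘ Sum.inl) (Sum.inr ∘ Sum.inr ∘ Sum.inr))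
def rows023 (n : ℕ) : TVert n → QVert n :=
  Sum.elim Sum.inl (Sum.elim (Sum.inr ∘ Sum.inr ∘ Sum.inl) (Sum.inr ∘ Sum.inr ∘ Sum.inr))
def rows123 (n : ℕ) : TVert n → QVert n :=
  Sum.elim (Sum.inr ∘ Sum.inl)
    (Sum.elim (Sum.inr ∘ Sum.inr ∘ Sum.inl) (Sum.inr ∘ Sum.inr ∘ Sum.inr))

def glue3 (n : ℕ) (τ ρ σ : Setoid (DVert n)) : Setoid (QVert n) :=
  σ.map (rows01 n) ⊔ ρ.map (rows12 n) ⊔ τ.map (rows23 n)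

theorem glue_eq_sup (τ ρ : Setoid (DVert n)) :
    glue n τ ρ = ρ.map (embBot n) ⊔ τ.map (embTop n) := by
  refine le_antisymm (Setoid.eqvGen_le ?_) (sup_le ?_ ?_)
  · rintro _ _ (⟨a, b, hab, rfl, rfl⟩ | ⟨a, b, hab, rfl, rfl⟩)
    · exact (le_sup_left : ρ.map (embBot n) ≤ _) (Setoid.le_comap_map hab)
    · exact (le_sup_right : τ.map (embTop n) ≤ _) (Setoid.le_comap_map hab)
  · exact Setoid.map_le_iff.2 fun a b hab => Relation.EqvGen.rel _ _ (.inl ⟨a, b, hab, rfl, rfl⟩)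
  · exact Setoid.map_le_iff.2 fun a b hab => Relation.EqvGen.rel _ _ (.inr ⟨a, b, hab, rfl, rfl⟩)

theorem map_glue {β : Type*} (τ ρ : Setoid (DVert n)) (f : TVert n → β) :
    (glue n τ ρ).map f = ρ.map (f ∘ embBot n) ⊔ τ.map (f ∘ embTop n) := by
  rw [glue_eq_sup, Setoid.map_sup, Setoid.map_map, Setoid.map_map]

theorem map_pcomp_le {β : Type*} (τ ρ : Setoid (DVert n)) (f : TVert n → β) :
    (pcomp n τ ρ).map (f ∘ embOut n) ≤ (glue n τ ρ).map f := by
  rw [← Setoid.map_map]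
  exact (Setoid.gc_map_comap f).monotone_l (Setoid.map_comap_le _ _)

theorem rows013_injective : (rows013 n).Injective := by
  rintro (_ | _ | _) (_ | _ | _) h <;> simp_all [rows013]

theorem rows123_injective : (rows123 n).Injective := by
  rintro (_ | _ | _) (_ | _ | _) h <;> simp_all [rows123]

theorem rows023_injective : (rows023 n).Injective := by
  rintro (_ | _ | _) (_ | _ | _) h <;> simp_all [rows023]

theorem rows012_injective : (rows012 n).Injective := by
  rintro (_ | _ | _) (_ | _ | _) h <;> simp_all [rows012]

theorem exists_of_rows013_eq_rows123 {u v : TVert n} (h : rows013 n u = rows123 n v) :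
    ∃ d, u = embTop n d ∧ v = embOut n d := by
  rcases u with _ | _ | _ <;> rcases v with _ | _ | _ <;> simp [rows013, rows123] at h
  · exact ⟨.inl _, by rw [h]; rfl, rfl⟩
  · exact ⟨.inr _, by rw [h]; rfl, rfl⟩

theorem exists_of_rows023_eq_rows012 {u v : TVert n} (h : rows023 n u = rows012 n v) :
    ∃ d, u = embBot n d ∧ v = embOut n d := by
  rcases u with _ | _ | _ <;> rcases v with _ | _ | _ <;> simp [rows023, rows012] at h
  · exact ⟨.inl _, by rw [h]; rfl, rfl⟩
  · exact ⟨.inr _, by rw [h]; rfl, rfl⟩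

theorem rows013_comp_embBot : rows013 n ∘ embBot n = rows01 n := by ext (_ | _) <;> rfl
theorem rows013_comp_embTop : rows013 n ∘ embTop n = rows123 n ∘ embOut n := by ext (_ | _) <;> rfl
theorem rows123_comp_embBot : rows123 n ∘ embBot n = rows12 n := by ext (_ | _) <;> rfl
theorem rows123_comp_embTop : rows123 n ∘ embTop n = rows23 n := by ext (_ | _) <;> rfl
theorem rows023_comp_embBot : rows023 n ∘ embBot n = rows012 n ∘ embOut n := by ext (_ | _) <;> rfl
theorem rows023_comp_embTop : rows023 n ∘ embTop n = rows23 n := by ext (_ | _) <;> rfl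
theorem rows012_comp_embBot : rows012 n ∘ embBot n = rows01 n := by ext (_ | _) <;> rfl
theorem rows012_comp_embTop : rows012 n ∘ embTop n = rows12 n := by ext (_ | _) <;> rfl
theorem rows013_comp_embOut : rows013 n ∘ embOut n = rows023 n ∘ embOut n := by ext (_ | _) <;> rfl

theorem glue_pcomp_left (τ ρ σ : Setoid (DVert n)) :
    glue n (pcomp n τ ρ) σ = (glue3 n τ ρ σ).comap (rows013 n) := by
  have hle := map_pcomp_le τ ρ (rows123 n)
  have hsup : (glue n (pcomp n τ ρ) σ).map (rows013 n) ⊔ (glue n τ ρ).map (rows123 n) =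
      glue3 n τ ρ σ := by
    simp only [map_glue, rows013_comp_embBot, rows013_comp_embTop, rows123_comp_embBot,
      rows123_comp_embTop] at hle ⊢
    rw [sup_assoc, sup_of_le_right hle, ← sup_assoc]
    rfl
  rw [← hsup]
  refine (Setoid.comap_sup_map_eq
    (Setoid.comap_map_le_of_injective rows013_injective rows123_injective ?_)).symm
  intro u u' v v' hu hu' hvv
  obtain ⟨d, rfl, rfl⟩ := exists_of_rows013_eq_rows123 hu
  obtain ⟨d', rfl, rfl⟩ := exists_of_rows013_eq_rows123 hu'
  exact Relation.EqvGen.rel _ _ (.inr ⟨d, d', hvv, rfl, rfl⟩)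

theorem glue_pcomp_right (τ ρ σ : Setoid (DVert n)) :
    glue n τ (pcomp n ρ σ) = (glue3 n τ ρ σ).comap (rows023 n) := by
  have hle := map_pcomp_le ρ σ (rows012 n)
  have hsup : (glue n τ (pcomp n ρ σ)).map (rows023 n) ⊔ (glue n ρ σ).map (rows012 n) =
      glue3 n τ ρ σ := by
    simp only [map_glue, rows023_comp_embBot, rows023_comp_embTop, rows012_comp_embBot,
      rows012_comp_embTop] at hle ⊢
    rw [sup_comm, ← sup_assoc, sup_of_le_left hle]
    rfl
  rw [← hsup]
  refine (Setoid.comap_sup_map_eq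
    (Setoid.comap_map_le_of_injective rows023_injective rows012_injective ?_)).symm
  intro u u' v v' hu hu' hvv
  obtain ⟨d, rfl, rfl⟩ := exists_of_rows023_eq_rows012 hu
  obtain ⟨d', rfl, rfl⟩ := exists_of_rows023_eq_rows012 hu'
  exact Relation.EqvGen.rel _ _ (.inl ⟨d, d', hvv, rfl, rfl⟩)

end Associativity

/-- the composition of the partition monoid `Pₙ` is associative. -/
theorem pcomp_assoc (n : ℕ) (τ ρ σ : Setoid (DVert n)) :
    pcomp n (pcomp n τ ρ) σ = pcomp n τ (pcomp n ρ σ) :=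
  calc pcomp n (pcomp n τ ρ) σ = (glue3 n τ ρ σ).comap (rows013 n ∘ embOut n) := by
        rw [Setoid.comap_comp, ← glue_pcomp_left]; rfl
    _ = (glue3 n τ ρ σ).comap (rows023 n ∘ embOut n) := by rw [rows013_comp_embOut]
    _ = pcomp n τ (pcomp n ρ σ) := by rw [Setoid.comap_comp, ← glue_pcomp_right]; rfl

end
end

section
/- If ι ∈ Pₙ is ⋆-self-dual and τ ∈ Pₙ satisfies r(τ ∘ ι) = r(ι), then the conjugate τ ∘ ι ∘ τ⋆ is again ⋆-self-dual and has rank r(ι). -/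
open scoped Classical
open Relation
noncomputable section

/-!
Glue `τ ∘ ι ∘ τ⋆` in one step, as the stack of `τ⋆`, `ι`, `τ` on four rows of vertices. Turning
the stack upside down swaps `τ` with `τ⋆` and fixes `ι = ι⋆`, so the conjugate is
`⋆`-self-dual.

Every propagating line of `τ ∘ ι` crosses `ι` along a propagating part, so `r(τ ∘ ι) = r(ι)`
forces each propagating part of `ι` to continue to the top through `τ`, and no two of them to be
joined there; by the flip the same holds downwards through `τ⋆`. Hence every propagating part
of `ι` continues to a propagating part of the conjugate, and all of these arise this way. Two
different parts of `ι` are never joined in the stack: being joined to a part `P` within `τ ∘ ι`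
or within `ι ∘ τ⋆` is preserved along every edge of the stack, because where a chain switches
from one to the other, in row `1` or `2`, the facts above put it into `P` itself.
-/

namespace EqvGen

variable {α β γ : Type*} {r : α → α → Prop}

theorem rel_map (s : Setoid β) {f : α → β} (h : ∀ x y, r x y → s (f x) (f y)) {x y : α}
    (hxy : EqvGen r x y) : s (f x) (f y) :=
  Setoid.eqvGen_le (s := s.comap f) h hxy

theorem iff_of_forall_rel_iff {p : α → Prop} (h : ∀ x y, r x y → (p x ↔ p y)) {x y : α}
    (hxy : EqvGen r x y) : p x ↔ p y :=
  Iff.of_eq (Setoid.ker_def.mp (rel_map (Setoid.ker p) (fun x y hr => propext (h x y hr)) hxy))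

theorem iff_of_le {r s : α → α → Prop} (hrs : ∀ x y, r x y → EqvGen s x y)
    (hsr : ∀ x y, s x y → EqvGen r x y) {x y : α} : EqvGen r x y ↔ EqvGen s x y :=
  ⟨rel_map (EqvGen.setoid s) (f := id) hrs, rel_map (EqvGen.setoid r) (f := id) hsr⟩

theorem exists_rel_ne {f : α → γ} {p q : α} (hpq : EqvGen r p q) (hf : f p ≠ f q) :
    ∃ a b, r a b ∧ f a ≠ f b ∧ EqvGen r p a := by
  rw [← Relation.EqvGen.reflTransGen_symmGen] at hpq
  induction hpq with
  | refl => exact absurd rfl hf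
  | @tail b c hpb hbc ih =>
    by_cases hb : f p = f b
    · have hpb' : EqvGen r p b := by rwa [← Relation.EqvGen.reflTransGen_symmGen]
      rcases hbc with hbc | hcb
      · exact ⟨b, c, hbc, hb ▸ hf, hpb'⟩
      · exact ⟨c, b, hcb, fun h => hf (hb.trans h.symm),
          hpb'.trans _ _ _ ((EqvGen.rel _ _ hcb).symm _ _)⟩
    · exact ih hb

/-- Vertices outside the image of `g` are only reached along the equivalence `s`, so every
excursion of a chain outside the image collapses to a single `s`-step. -/
theorem map_or_setoid_iff (g : β → α) (r : β → β → Prop) (s : Setoid α) {y y' : β} :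
    EqvGen (fun p q => Relation.Map r g g p q ∨ s p q) (g y) (g y') ↔
      EqvGen (fun a b => r a b ∨ s (g a) (g b)) y y' := by
  set t := EqvGen.setoid (fun a b => r a b ∨ s (g a) (g b))
  constructor
  · let w : Setoid α :=
      { r := fun p q => s p q ∨ ∃ a b, s p (g a) ∧ t a b ∧ s (g b) q
        iseqv := by
          refine ⟨fun p => .inl (s.refl p), ?_, ?_⟩
          · rintro p q (h | ⟨a, b, hpa, hab, hbq⟩)
            · exact .inl (s.symm h)
            · exact .inr ⟨b, a, s.symm hbq, t.symm hab, s.symm hpa⟩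
          · rintro p q u (h | ⟨a, b, hpa, hab, hbq⟩) (h' | ⟨a', b', hqa, hab', hbu⟩)
            · exact .inl (s.trans h h')
            · exact .inr ⟨a', b', s.trans h hqa, hab', hbu⟩
            · exact .inr ⟨a, b, hpa, hab, s.trans hbq h'⟩
            · have hba : t b a' := EqvGen.rel _ _ (.inr (s.trans hbq hqa))
              exact .inr ⟨a, b', hpa, t.trans (t.trans hab hba) hab', hbu⟩ }
    intro h
    have hw : w (g y) (g y') := by
      refine rel_map w (f := id) ?_ h
      rintro p q (⟨a, b, hab, rfl, rfl⟩ | hpq)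
      · exact .inr ⟨a, b, s.refl _, EqvGen.rel _ _ (.inl hab), s.refl _⟩
      · exact .inl hpq
    rcases hw with h | ⟨a, b, hya, hab, hby'⟩
    · exact EqvGen.rel _ _ (.inr h)
    · exact t.trans (t.trans (EqvGen.rel _ _ (.inr hya)) hab) (EqvGen.rel _ _ (.inr hby'))
  · refine rel_map (EqvGen.setoid _) ?_
    rintro a b (hab | hab)
    · exact EqvGen.rel _ _ (.inl ⟨a, b, hab, rfl, rfl⟩)
    · exact EqvGen.rel _ _ (.inr hab)

end EqvGen

theorem Set.image_eq_and_injOn_of_subset_image {α β : Type*} {f : α → β} {s : Set α}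
    {t : Set β} (hs : s.Finite) (hts : t ⊆ f '' s) (hcard : s.ncard ≤ t.ncard) :
    f '' s = t ∧ InjOn f s := by
  have himage : (f '' s).ncard ≤ s.ncard := Set.ncard_image_le hs
  have heq : t = f '' s :=
    Set.eq_of_subset_of_ncard_le hts (himage.trans hcard) (hs.image f)
  subst heq
  exact ⟨rfl, Set.injOn_of_ncard_image_eq (le_antisymm himage hcard) hs⟩

theorem Setoid.rel_of_mem_classes {α : Type*} {s : Setoid α} {C : Set α} (hC : C ∈ s.classes)
    {x y : α} (hx : x ∈ C) (hy : y ∈ C) : s x y :=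
  (s.rel_iff_exists_classes).mpr ⟨C, hC, hx, hy⟩

namespace PartitionMonoid

variable {n : ℕ}

def propClasses (σ : Setoid (DVert n)) : Set (Set (DVert n)) :=
  {C ∈ σ.classes | IsPropagating C}

theorem class_mem_propClasses_of_rel {σ : Setoid (DVert n)} {u v : DVert n} (h : σ.r u v)
    (huv : u.isLeft ≠ v.isLeft) : {y | σ.r y u} ∈ propClasses σ := by
  refine ⟨σ.mem_classes u, ?_⟩
  rcases u with i | j <;> rcases v with i' | j' <;> simp only [Sum.isLeft_inl,
    Sum.isLeft_inr, ne_eq, not_true_eq_false] at huv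
  · exact ⟨⟨i, σ.refl' _⟩, ⟨j', σ.symm' h⟩⟩
  · exact ⟨⟨i', σ.symm' h⟩, ⟨j, σ.refl' _⟩⟩

theorem embBot_injective : Function.Injective (embBot n) := by
  rintro (i | i) (j | j) h <;> simp_all [embBot]

@[simp] theorem isLeft_embBot (u : DVert n) : (embBot n u).isLeft = u.isLeft := by
  cases u <;> rfl

@[simp] theorem embTop_eq_inr (u : DVert n) : embTop n u = Sum.inr u := by
  cases u <;> rfl

section RankPreserving

variable (a b : Setoid (DVert n))

theorem glue_embBot {u v : DVert n} (h : b.r u v) :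
    (glue n a b).r (embBot n u) (embBot n v) :=
  EqvGen.rel _ _ (.inl ⟨u, v, h, rfl, rfl⟩)

theorem glue_embTop {u v : DVert n} (h : a.r u v) :
    (glue n a b).r (embTop n u) (embTop n v) :=
  EqvGen.rel _ _ (.inr ⟨u, v, h, rfl, rfl⟩)

/-- The part of `a ∘ b` through which the part `P` of `b` continues. -/
def compClass (P : Set (DVert n)) : Set (DVert n) :=
  {y | ∃ x ∈ P, (glue n a b).r (embOut n y) (embBot n x)}

variable {a b}

theorem mem_compClass_iff {P : Set (DVert n)} (hP : P ∈ b.classes) {x : DVert n} (hx : x ∈ P)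
    {y : DVert n} : y ∈ compClass a b P ↔ (glue n a b).r (embOut n y) (embBot n x) :=
  ⟨fun ⟨_, hx', h⟩ =>
    (glue n a b).trans' h (glue_embBot a b (Setoid.rel_of_mem_classes hP hx' hx)),
    fun h => ⟨x, hx, h⟩⟩

theorem compClass_mem_classes {P : Set (DVert n)} (hP : P ∈ propClasses b) :
    compClass a b P ∈ (pcomp n a b).classes := by
  obtain ⟨i, hi⟩ := hP.2.1
  have : compClass a b P = {y | (pcomp n a b).r y (Sum.inl i)} :=
    Set.ext fun _ => mem_compClass_iff hP.1 hi
  exact this ▸ Setoid.mem_classes _ _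

variable (a b) in
/-- A propagating line of `a ∘ b` has to cross `b` along one of its propagating parts. -/
theorem propClasses_pcomp_subset_image :
    propClasses (pcomp n a b) ⊆ compClass a b '' propClasses b := by
  rintro C ⟨hC, ⟨i, hi⟩, ⟨k, hk⟩⟩
  have hik : (glue n a b).r (Sum.inl i) (Sum.inr (Sum.inr k)) :=
    Setoid.rel_of_mem_classes hC hi hk
  obtain ⟨s, t, hst, hne, his⟩ := EqvGen.exists_rel_ne (f := Sum.isLeft) hik (by simp)
  rcases hst with ⟨u, v, huv, rfl, rfl⟩ | ⟨u, v, -, rfl, rfl⟩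
  · rw [isLeft_embBot, isLeft_embBot] at hne
    have hP := class_mem_propClasses_of_rel huv hne
    have hiP : Sum.inl i ∈ compClass a b {y | b.r y u} := ⟨u, b.refl' u, his⟩
    exact ⟨_, hP, Setoid.eq_of_mem_classes (compClass_mem_classes hP) hiP hC hi⟩
  · simp at hne

section

variable (hr : prank n (pcomp n a b) = prank n b)
include hr

theorem image_compClass :
    compClass a b '' propClasses b = propClasses (pcomp n a b) ∧
      Set.InjOn (compClass a b) (propClasses b) :=
  Set.image_eq_and_injOn_of_subset_image (Set.toFinite _)
    (propClasses_pcomp_subset_image a b) hr.ge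

theorem exists_glue_top {P : Set (DVert n)} (hP : P ∈ propClasses b) :
    ∃ x ∈ P, ∃ k, (glue n a b).r (embBot n x) (Sum.inr (Sum.inr k)) := by
  have hprop : compClass a b P ∈ propClasses (pcomp n a b) :=
    (image_compClass hr).1 ▸ Set.mem_image_of_mem _ hP
  obtain ⟨k, x, hx, h⟩ := hprop.2.2
  exact ⟨x, hx, k, (glue n a b).symm' h⟩

theorem eq_of_glue_embBot {P P' : Set (DVert n)} (hP : P ∈ propClasses b)
    (hP' : P' ∈ propClasses b) {x x' : DVert n} (hx : x ∈ P) (hx' : x' ∈ P')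
    (h : (glue n a b).r (embBot n x) (embBot n x')) : P = P' :=
  (image_compClass hr).2 hP hP' <| Set.ext fun _ => by
    rw [mem_compClass_iff hP.1 hx, mem_compClass_iff hP'.1 hx']
    exact ⟨fun hy => (glue n a b).trans' hy h,
      fun hy => (glue n a b).trans' hy ((glue n a b).symm' h)⟩

/-- Otherwise the part of `Sum.inl i` is either trapped in the bottom row or a second propagating
part glued to `P`. -/
theorem rel_of_glue_inl {P : Set (DVert n)} (hP : P ∈ propClasses b) {x : DVert n} (hx : x ∈ P)
    {i : Fin n} (h : (glue n a b).r (Sum.inl i) (embBot n x)) : b.r (Sum.inl i) x := by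
  by_cases hQ : IsPropagating {y | b.r y (Sum.inl i)}
  · have hPQ := eq_of_glue_embBot hr ⟨b.mem_classes _, hQ⟩ hP (b.refl' _) hx h
    exact b.symm' (hPQ ▸ hx : x ∈ {y | b.r y (Sum.inl i)})
  let inClass : TVert n → Prop := fun t => ∃ u, t = embBot n u ∧ b.r u (Sum.inl i)
  have notMem_top : ∀ w, ¬ inClass (embTop n w) := by
    rintro (j | k) ⟨(i' | j'), hu, hui⟩ <;> simp [embBot] at hu
    exact hQ ⟨⟨i, b.refl' _⟩, ⟨j, hu ▸ hui⟩⟩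
  have hinv : inClass (Sum.inl i) ↔ inClass (embBot n x) := by
    refine EqvGen.iff_of_forall_rel_iff ?_ h
    rintro s t (⟨u, v, huv, rfl, rfl⟩ | ⟨u, v, -, rfl, rfl⟩)
    · simp only [inClass, embBot_injective.eq_iff, exists_eq_left']
      exact ⟨b.trans' (b.symm' huv), b.trans' huv⟩
    · exact iff_of_false (notMem_top u) (notMem_top v)
  obtain ⟨u, hu, hui⟩ := hinv.mp ⟨Sum.inl i, rfl, b.refl' _⟩
  rw [embBot_injective hu]
  exact b.symm' hui

end

end RankPreserving

section Stack

/-- Four rows of vertices, numbered `0, 1, 2, 3` from the bottom; rows `1, 2, 3` are a copy of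
`TVert n`. -/
abbrev FourRow (n : ℕ) := Fin n ⊕ TVert n

def e01 : DVert n → FourRow n := Sum.elim Sum.inl fun i => Sum.inr (Sum.inl i)
def e12 (u : DVert n) : FourRow n := Sum.inr (embBot n u)
def e23 (u : DVert n) : FourRow n := Sum.inr (embTop n u)
def e03 : DVert n → FourRow n := Sum.elim Sum.inl fun k => Sum.inr (Sum.inr (Sum.inr k))

/-- Rows `0, 1, 3`, receiving the vertices of the outer gluing of `(a ∘ b) ∘ c`. -/
def outerEmb : TVert n → FourRow n := Sum.map id (embOut n)

def flipRows : FourRow n → FourRow n :=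
  Sum.elim (fun i => Sum.inr (Sum.inr (Sum.inr i)))
    (Sum.elim (fun i => Sum.inr (Sum.inr (Sum.inl i))) (Sum.elim (fun i => Sum.inr (Sum.inl i))
      Sum.inl))

@[simp] theorem outerEmb_embBot (u : DVert n) : outerEmb (embBot n u) = e01 u := by
  cases u <;> rfl

@[simp] theorem outerEmb_embTop (u : DVert n) :
    outerEmb (embTop n u) = Sum.inr (embOut n u) := by
  cases u <;> rfl

theorem outerEmb_embOut (u : DVert n) : outerEmb (embOut n u) = e03 u := by
  cases u <;> rfl

@[simp] theorem flipRows_e01 (u : DVert n) : flipRows (e01 u) = e23 u.swap := by cases u <;> rfl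
@[simp] theorem flipRows_e12 (u : DVert n) : flipRows (e12 u) = e12 u.swap := by cases u <;> rfl
@[simp] theorem flipRows_e23 (u : DVert n) : flipRows (e23 u) = e01 u.swap := by cases u <;> rfl
@[simp] theorem flipRows_e03 (u : DVert n) : flipRows (e03 u) = e03 u.swap := by cases u <;> rfl

@[simp] theorem flipRows_flipRows (p : FourRow n) : flipRows (flipRows p) = p := by
  rcases p with i | i | i | i <;> rfl

@[simp] theorem pstar_swap {σ : Setoid (DVert n)} {u v : DVert n} :
    (pstar n σ).r u.swap v.swap ↔ σ.r u v := by
  show σ.r u.swap.swap v.swap.swap ↔ _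
  rw [Sum.swap_swap, Sum.swap_swap]

theorem pstar_pstar (σ : Setoid (DVert n)) : pstar n (pstar n σ) = σ :=
  Setoid.ext fun x y => by
    show σ.r x.swap.swap y.swap.swap ↔ _
    rw [Sum.swap_swap, Sum.swap_swap]

def stack (bot mid top : Setoid (DVert n)) : Setoid (FourRow n) :=
  EqvGen.setoid fun p q => Relation.Map bot.r e01 e01 p q ∨ Relation.Map mid.r e12 e12 p q ∨
    Relation.Map top.r e23 e23 p q

variable (a b c : Setoid (DVert n))

/-- `glue n a b` on rows `1, 2, 3`, with row `0` discrete. -/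
def up : Setoid (FourRow n) where
  r := Sum.LiftRel (· = ·) (glue n a b).r
  iseqv := by
    refine ⟨?_, ?_, ?_⟩
    · rintro (i | t)
      exacts [.inl rfl, .inr ((glue n a b).refl' t)]
    · rintro _ _ (h | h)
      exacts [.inl h.symm, .inr ((glue n a b).symm' h)]
    · rintro _ _ _ (h | h) (h' | h')
      exacts [.inl (h.trans h'), .inr ((glue n a b).trans' h h')]

theorem up_inr_iff {s t : TVert n} : (up a b).r (Sum.inr s) (Sum.inr t) ↔ (glue n a b).r s t :=
  Sum.liftRel_inr_inr

theorem up_le_stack {p q : FourRow n} (h : (up a b).r p q) : (stack c b a).r p q := by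
  rcases h with ⟨rfl⟩ | ⟨h⟩
  · exact (stack c b a).refl' _
  · refine EqvGen.rel_map (stack c b a) (f := Sum.inr) ?_ h
    rintro s t (⟨u, v, huv, rfl, rfl⟩ | ⟨u, v, huv, rfl, rfl⟩)
    exacts [EqvGen.rel _ _ (.inr (.inl ⟨u, v, huv, rfl, rfl⟩)),
      EqvGen.rel _ _ (.inr (.inr ⟨u, v, huv, rfl, rfl⟩))]

/-- The outer gluing of `(a ∘ b) ∘ c`, with the inner composite `a ∘ b` replaced by `up a b`. -/
theorem glue_pcomp_iff {s t : TVert n} :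
    (glue n (pcomp n a b) c).r s t ↔
      EqvGen (fun s t => (∃ u v, c.r u v ∧ s = embBot n u ∧ t = embBot n v) ∨
        (up a b).r (outerEmb s) (outerEmb t)) s t := by
  refine EqvGen.iff_of_le ?_ ?_
  · rintro s t (hc | ⟨u, v, huv, rfl, rfl⟩)
    · exact EqvGen.rel _ _ (.inl hc)
    · refine EqvGen.rel _ _ (.inr ?_)
      rw [outerEmb_embTop, outerEmb_embTop]
      exact .inr huv
  · rintro s t (hc | hup)
    · exact EqvGen.rel _ _ (.inl hc)
    rcases s with i | u <;> rcases t with i' | v <;> rcases hup with ⟨rfl⟩ | ⟨hup⟩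
    · exact EqvGen.refl _
    · exact EqvGen.rel _ _ (.inr ⟨u, v, hup, (embTop_eq_inr u).symm, (embTop_eq_inr v).symm⟩)

theorem stack_eq_eqvGen {p q : FourRow n} :
    (stack c b a).r p q ↔ EqvGen (fun p q => Relation.Map
      (fun s t => ∃ u v, c.r u v ∧ s = embBot n u ∧ t = embBot n v) outerEmb outerEmb p q ∨
        (up a b).r p q) p q := by
  refine EqvGen.iff_of_le ?_ ?_
  · rintro p q (⟨u, v, huv, rfl, rfl⟩ | ⟨u, v, huv, rfl, rfl⟩ | ⟨u, v, huv, rfl, rfl⟩)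
    · exact EqvGen.rel _ _
        (.inl ⟨_, _, ⟨u, v, huv, rfl, rfl⟩, outerEmb_embBot u, outerEmb_embBot v⟩)
    · exact EqvGen.rel _ _ (.inr (.inr (glue_embBot a b huv)))
    · exact EqvGen.rel _ _ (.inr (.inr (glue_embTop a b huv)))
  · rintro p q (⟨_, _, ⟨u, v, huv, rfl, rfl⟩, rfl, rfl⟩ | hup)
    · rw [outerEmb_embBot, outerEmb_embBot]
      exact EqvGen.rel _ _ (.inl ⟨u, v, huv, rfl, rfl⟩)
    · exact up_le_stack a b c hup

theorem pcomp_pcomp_iff_stack {x y : DVert n} :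
    (pcomp n (pcomp n a b) c).r x y ↔ (stack c b a).r (e03 x) (e03 y) := by
  rw [← outerEmb_embOut, ← outerEmb_embOut, stack_eq_eqvGen, EqvGen.map_or_setoid_iff]
  exact glue_pcomp_iff a b c

theorem stack_flipRows {p q : FourRow n} (h : (stack c b a).r p q) :
    (stack (pstar n a) (pstar n b) (pstar n c)).r (flipRows p) (flipRows q) := by
  refine EqvGen.rel_map _ ?_ h
  rintro p q (⟨u, v, huv, rfl, rfl⟩ | ⟨u, v, huv, rfl, rfl⟩ | ⟨u, v, huv, rfl, rfl⟩) <;>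
    simp only [flipRows_e01, flipRows_e12, flipRows_e23]
  · exact EqvGen.rel _ _ (.inr (.inr ⟨u.swap, v.swap, pstar_swap.mpr huv, rfl, rfl⟩))
  · exact EqvGen.rel _ _ (.inr (.inl ⟨u.swap, v.swap, pstar_swap.mpr huv, rfl, rfl⟩))
  · exact EqvGen.rel _ _ (.inl ⟨u.swap, v.swap, pstar_swap.mpr huv, rfl, rfl⟩)

end Stack

section Conjugate

variable (τ ι : Setoid (DVert n))

abbrev conjugate : Setoid (DVert n) := pcomp n (pcomp n τ ι) (pstar n τ)

def linkedUp (P : Set (DVert n)) (p : FourRow n) : Prop :=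
  ∃ z ∈ P, (up τ ι).r p (e12 z)

/-- The vertices joined to `P` within `τ ∘ ι` (rows `1` to `3`) or, after turning the picture
upside down, within `ι ∘ τ⋆` (rows `0` to `2`). -/
def linked (P : Set (DVert n)) (p : FourRow n) : Prop :=
  linkedUp τ ι P p ∨ linkedUp τ ι (Sum.swap '' P) (flipRows p)

/-- The part of `τ ∘ ι ∘ τ⋆` through which the part `P` of `ι` continues. -/
def conjClass (P : Set (DVert n)) : Set (DVert n) :=
  {y | ∃ x ∈ P, (stack (pstar n τ) ι τ).r (e03 y) (e12 x)}

variable {τ ι}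

theorem mem_swap_image {P : Set (DVert n)} {y : DVert n} : y ∈ Sum.swap '' P ↔ y.swap ∈ P := by
  refine ⟨?_, fun h => ⟨y.swap, h, Sum.swap_swap y⟩⟩
  rintro ⟨x, hx, rfl⟩
  rwa [Sum.swap_swap]

theorem linked_iff_flipRows {P : Set (DVert n)} {p : FourRow n} :
    linked τ ι P p ↔ linked τ ι (Sum.swap '' P) (flipRows p) := by
  rw [linked, linked, flipRows_flipRows, Set.image_image]
  simp only [Sum.swap_swap, Set.image_id']
  exact or_comm

theorem mem_conjClass_iff {P : Set (DVert n)} (hP : P ∈ ι.classes) {x : DVert n} (hx : x ∈ P)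
    {y : DVert n} : y ∈ conjClass τ ι P ↔ (stack (pstar n τ) ι τ).r (e03 y) (e12 x) := by
  refine ⟨fun ⟨x', hx', h⟩ => (stack _ ι τ).trans' h ?_, fun h => ⟨x, hx, h⟩⟩
  exact EqvGen.rel _ _ (.inr (.inl ⟨x', x, Setoid.rel_of_mem_classes hP hx' hx, rfl, rfl⟩))

variable (hι : pstar n ι = ι)
include hι

theorem rel_swap_iff {u v : DVert n} : ι.r u.swap v.swap ↔ ι.r u v := by
  have h := pstar_swap (σ := ι) (u := u) (v := v)
  rwa [hι] at h

theorem swap_image_mem_propClasses {P : Set (DVert n)} (hP : P ∈ propClasses ι) :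
    Sum.swap '' P ∈ propClasses ι := by
  obtain ⟨⟨z, rfl⟩, ⟨i, hi⟩, ⟨k, hk⟩⟩ := hP
  have hswap : Sum.swap '' {y | ι.r y z} = {y | ι.r y z.swap} := Set.ext fun y => by
    rw [mem_swap_image, Set.mem_ofPred_eq, Set.mem_ofPred_eq, ← rel_swap_iff hι, Sum.swap_swap]
  exact ⟨hswap ▸ ι.mem_classes _, ⟨k, Sum.inr k, hk, rfl⟩, ⟨i, Sum.inl i, hi, rfl⟩⟩

theorem stack_flipRows_iff {p q : FourRow n} :
    (stack (pstar n τ) ι τ).r (flipRows p) (flipRows q) ↔ (stack (pstar n τ) ι τ).r p q := by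
  have key : ∀ p q, (stack (pstar n τ) ι τ).r p q →
      (stack (pstar n τ) ι τ).r (flipRows p) (flipRows q) := fun p q h => by
    have h' := stack_flipRows _ _ _ h
    rwa [pstar_pstar, hι] at h'
  exact ⟨fun h => by simpa using key _ _ h, key p q⟩

theorem pstar_conjugate : pstar n (conjugate τ ι) = conjugate τ ι :=
  Setoid.ext fun x y => by
    show (conjugate τ ι).r x.swap y.swap ↔ (conjugate τ ι).r x y
    rw [pcomp_pcomp_iff_stack, pcomp_pcomp_iff_stack, ← flipRows_e03, ← flipRows_e03,
      stack_flipRows_iff hι]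

theorem linked_of_mid_edge {P : Set (DVert n)} {u v : DVert n} (huv : ι.r u v)
    (h : linked τ ι P (e12 u)) : linked τ ι P (e12 v) := by
  have hedge : ∀ {u v}, ι.r u v → (up τ ι).r (e12 v) (e12 u) := fun huv =>
    (up_inr_iff τ ι).mpr (glue_embBot τ ι (ι.symm' huv))
  rcases h with ⟨z, hz, hu⟩ | ⟨z, hz, hu⟩
  · exact .inl ⟨z, hz, (up τ ι).trans' (hedge huv) hu⟩
  · rw [flipRows_e12] at hu
    refine .inr ⟨z, hz, ?_⟩
    rw [flipRows_e12]
    exact (up τ ι).trans' (hedge ((rel_swap_iff hι).mpr huv)) hu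

variable (hr : prank n (pcomp n τ ι) = prank n ι)
include hr

/-- Joined to `P` from below, a vertex of row `2` is joined through row `1` of the flipped
picture, where `rel_of_glue_inl` puts it into `P`; a vertex of row `3` cannot be joined from
below at all. -/
theorem linked_of_top_edge {P : Set (DVert n)} (hP : P ∈ propClasses ι) {u v : DVert n}
    (huv : τ.r u v) (h : linked τ ι P (e23 u)) : linked τ ι P (e23 v) := by
  have hedge : (up τ ι).r (e23 v) (e23 u) :=
    (up_inr_iff τ ι).mpr (glue_embTop τ ι (τ.symm' huv))
  rcases h with ⟨z, hz, hu⟩ | ⟨z, hz, hu⟩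
  · exact .inl ⟨z, hz, (up τ ι).trans' hedge hu⟩
  rcases u with j | k
  · have hjz : ι.r (Sum.inl j) z :=
      rel_of_glue_inl hr (swap_image_mem_propClasses hι hP) hz ((up_inr_iff τ ι).mp hu)
    refine .inl ⟨z.swap, mem_swap_image.mp hz, (up τ ι).trans' hedge ?_⟩
    exact (up_inr_iff τ ι).mpr (glue_embBot τ ι ((rel_swap_iff hι).mpr hjz))
  · cases hu

theorem linked_of_bot_edge {P : Set (DVert n)} (hP : P ∈ propClasses ι) {u v : DVert n}
    (huv : (pstar n τ).r u v) (h : linked τ ι P (e01 u)) : linked τ ι P (e01 v) := by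
  rw [linked_iff_flipRows, flipRows_e01] at h ⊢
  exact linked_of_top_edge hι hr (swap_image_mem_propClasses hι hP) huv h

theorem linked_iff_of_stack {P : Set (DVert n)} (hP : P ∈ propClasses ι) {p q : FourRow n}
    (h : (stack (pstar n τ) ι τ).r p q) : linked τ ι P p ↔ linked τ ι P q := by
  refine EqvGen.iff_of_forall_rel_iff ?_ h
  rintro p q (⟨u, v, huv, rfl, rfl⟩ | ⟨u, v, huv, rfl, rfl⟩ | ⟨u, v, huv, rfl, rfl⟩)
  · exact ⟨linked_of_bot_edge hι hr hP huv, linked_of_bot_edge hι hr hP (Setoid.symm' _ huv)⟩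
  · exact ⟨linked_of_mid_edge hι huv, linked_of_mid_edge hι (ι.symm' huv)⟩
  · exact ⟨linked_of_top_edge hι hr hP huv, linked_of_top_edge hι hr hP (τ.symm' huv)⟩

theorem eq_of_stack_e12 {P P' : Set (DVert n)} (hP : P ∈ propClasses ι)
    (hP' : P' ∈ propClasses ι) {x x' : DVert n} (hx : x ∈ P) (hx' : x' ∈ P')
    (h : (stack (pstar n τ) ι τ).r (e12 x) (e12 x')) : P = P' := by
  have hlinked : linked τ ι P (e12 x') :=
    (linked_iff_of_stack hι hr hP h).mp (.inl ⟨x, hx, (up τ ι).refl' _⟩)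
  rcases hlinked with ⟨z, hz, hup⟩ | ⟨z, hz, hup⟩
  · exact (eq_of_glue_embBot hr hP' hP hx' hz ((up_inr_iff τ ι).mp hup)).symm
  · rw [flipRows_e12] at hup
    have hswap := eq_of_glue_embBot hr (swap_image_mem_propClasses hι hP')
      (swap_image_mem_propClasses hι hP) (Set.mem_image_of_mem _ hx') hz
      ((up_inr_iff τ ι).mp hup)
    exact (Set.image_injective.mpr Sum.swap_leftInverse.injective hswap).symm

theorem conjClass_mem_propClasses {P : Set (DVert n)} (hP : P ∈ propClasses ι) :
    conjClass τ ι P ∈ propClasses (conjugate τ ι) := by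
  obtain ⟨x, hx, k, hk⟩ := exists_glue_top hr hP
  have htop : (stack (pstar n τ) ι τ).r (e12 x) (e03 (Sum.inr k)) :=
    up_le_stack _ _ _ ((up_inr_iff τ ι).mpr hk)
  obtain ⟨x', hx', k', hk'⟩ := exists_glue_top hr (swap_image_mem_propClasses hι hP)
  have hbot : (stack (pstar n τ) ι τ).r (e12 x'.swap) (e03 (Sum.inl k')) := by
    have h : (stack (pstar n τ) ι τ).r (flipRows (e12 x')) (flipRows (e03 (Sum.inr k'))) :=
      (stack_flipRows_iff hι).mpr (up_le_stack _ _ _ ((up_inr_iff τ ι).mpr hk'))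
    rwa [flipRows_e12, flipRows_e03] at h
  have hclass : conjClass τ ι P = {y | (conjugate τ ι).r y (Sum.inr k)} :=
    Set.ext fun y => by
      rw [mem_conjClass_iff hP.1 hx, Set.mem_ofPred_eq, pcomp_pcomp_iff_stack]
      exact ⟨fun h => Setoid.trans' _ h htop, fun h => Setoid.trans' _ h (Setoid.symm' _ htop)⟩
  exact ⟨hclass ▸ Setoid.mem_classes _ _,
    ⟨k', x'.swap, mem_swap_image.mp hx', Setoid.symm' _ hbot⟩, ⟨k, x, hx, Setoid.symm' _ htop⟩⟩

theorem propClasses_conjugate_subset_image :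
    propClasses (conjugate τ ι) ⊆ conjClass τ ι '' propClasses ι := by
  rintro C ⟨hC, ⟨i, hi⟩, ⟨k, hk⟩⟩
  have hik : (stack (pstar n τ) ι τ).r (e03 (Sum.inl i)) (e03 (Sum.inr k)) :=
    (pcomp_pcomp_iff_stack _ _ _).mp (Setoid.rel_of_mem_classes hC hi hk)
  let lowerHalf : FourRow n → Bool := Sum.elim (fun _ => true) Sum.isLeft
  obtain ⟨p, q, hpq, hne, hip⟩ :=
    EqvGen.exists_rel_ne (f := lowerHalf) hik (by simp [lowerHalf, e03])
  rcases hpq with ⟨u, v, -, rfl, rfl⟩ | ⟨u, v, huv, rfl, rfl⟩ | ⟨u, v, -, rfl, rfl⟩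
  · cases u <;> cases v <;> simp [lowerHalf, e01] at hne
  · have hne' : u.isLeft ≠ v.isLeft := by simpa [lowerHalf, e12] using hne
    have hQ := class_mem_propClasses_of_rel huv hne'
    have hiQ : Sum.inl i ∈ conjClass τ ι {y | ι.r y u} := ⟨u, ι.refl' u, hip⟩
    exact ⟨_, hQ, Setoid.eq_of_mem_classes (conjClass_mem_propClasses hι hr hQ).1 hiQ hC hi⟩
  · simp [lowerHalf, e23] at hne

theorem image_conjClass : conjClass τ ι '' propClasses ι = propClasses (conjugate τ ι) :=
  Set.Subset.antisymm (Set.image_subset_iff.mpr fun _ => conjClass_mem_propClasses hι hr)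
    (propClasses_conjugate_subset_image hι hr)

theorem conjClass_injOn : Set.InjOn (conjClass τ ι) (propClasses ι) := by
  intro P hP P' hP' h
  obtain ⟨i, x, hx, hix⟩ := (conjClass_mem_propClasses hι hr hP).2.1
  obtain ⟨x', hx', hix'⟩ : Sum.inl i ∈ conjClass τ ι P' := h ▸ ⟨x, hx, hix⟩
  exact eq_of_stack_e12 hι hr hP hP' hx hx' (Setoid.trans' _ (Setoid.symm' _ hix) hix')

end Conjugate

end PartitionMonoid

/-- if `ι` is `⋆`-self-dual and `r(τ∘ι) = r(ι)`, then `τ∘ι∘τ⋆` is again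
`⋆`-self-dual of rank `r(ι)`. -/
theorem conjugate_selfdual (n : ℕ) (τ ι : Setoid (DVert n))
    (hι : pstar n ι = ι) (hr : prank n (pcomp n τ ι) = prank n ι) :
    pstar n (pcomp n (pcomp n τ ι) (pstar n τ)) = pcomp n (pcomp n τ ι) (pstar n τ) ∧
      prank n (pcomp n (pcomp n τ ι) (pstar n τ)) = prank n ι := by
  refine ⟨PartitionMonoid.pstar_conjugate hι, ?_⟩
  change (PartitionMonoid.propClasses (PartitionMonoid.conjugate τ ι)).ncard =
    (PartitionMonoid.propClasses ι).ncard
  rw [← PartitionMonoid.image_conjClass hι hr,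
    (PartitionMonoid.conjClass_injOn hι hr).ncard_image]

end
end

section
/- Let τ ∈ Pₙ be the partition {1,1'} ∪ {2,2'} ∪ ... ∪ {k-1,(k-1)'} ∪ {k, k+1,...,n, k',(k+1)',...,n'} (for 1 ≤ k ≤ n). Then τ = τ⋆, τ ∘ τ = τ, c(τ,τ) = 0, and the set H of diagrams ρ of rank k with τ ∘ ρ = ρ = ρ ∘ τ is a group under ∘ isomorphic to the symmetric group S_k, with identity element τ. -/
open scoped Classical
open Relation
noncomputable section

/-- The index of a vertex, forgetting whether it is primed. -/
def vidx {n : ℕ} (x : DVert n) : ℕ := Sum.elim Fin.val Fin.val x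

/-- The diagram `{1,1'} ∪ ⋯ ∪ {k-1,(k-1)'} ∪ {k,…,n,k',…,n'}` of `Pₙ`
(0-indexed: parts `{i,i'}` for `i < k-1` and one big part on indices `≥ k-1`). -/
def tauP (n k : ℕ) : Setoid (DVert n) where
  r x y := vidx x = vidx y ∨ (k - 1 ≤ vidx x ∧ k - 1 ≤ vidx y)
  iseqv := by
    constructor
    · intro x; exact Or.inl rfl
    · rintro x y (h | h)
      · exact Or.inl h.symm
      · exact Or.inr ⟨h.2, h.1⟩
    · rintro x y z (h₁ | h₁) (h₂ | h₂)
      · exact Or.inl (h₁.trans h₂)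
      · exact Or.inr ⟨h₂.1.trans_eq h₁.symm, h₂.2⟩
      · exact Or.inr ⟨h₁.1, h₁.2.trans_eq h₂⟩
      · exact Or.inr ⟨h₁.1, h₂.2⟩

/-- The set `H` of diagrams `ρ` of rank `k` with `τ∘ρ = ρ = ρ∘τ`. -/
def Hset (n k : ℕ) (τ : Setoid (DVert n)) : Set (Setoid (DVert n)) :=
  {ρ | prank n ρ = k ∧ pcomp n τ ρ = ρ ∧ pcomp n ρ τ = ρ}

/-!
A diagram `ρ` with `τ ∘ ρ = ρ = ρ ∘ τ` has all unprimed vertices of index `≥ k - 1` in one part,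
and likewise all primed ones. Hence every propagating part of `ρ` contains an unprimed and a primed
vertex of index `< k`; as there are `k` propagating parts, they match these two sets of `k` vertices
bijectively, and `ρ` is the diagram of a permutation `π ∈ S_k` (with `τ` the diagram of `1`).
Gluing two such diagrams composes their permutations.
-/

open Function Set

lemma Setoid.setOf_rel_eq_iff {α : Type*} (s : Setoid α) {a b : α} :
    {x | s x a} = {x | s x b} ↔ s a b :=
  ⟨fun h => (h ▸ s.refl a : a ∈ {x | s x b}),
    fun h => Set.ext fun _ => ⟨fun hx => s.trans hx h, fun hx => s.trans hx (s.symm h)⟩⟩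

lemma Setoid.eq_ker_of_rel_section {α β : Type*} (s : Setoid α) (f : α → β) (g : β → α)
    (hg : ∀ x, s x (g (f x))) (hinj : ∀ b b', s (g b) (g b') → b = b') : s = Setoid.ker f :=
  Setoid.ext fun x y => by
    rw [Setoid.ker_def]
    exact ⟨fun h => hinj _ _ (s.trans (s.symm (hg x)) (s.trans h (hg y))),
      fun h => s.trans (hg x) (h ▸ s.symm (hg y))⟩

lemma range_eq_and_injective_of_subset_range {ι β : Type*} [Finite ι] {f : ι → β} {S : Set β}
    (hS : S ⊆ range f) (hcard : Nat.card ι ≤ S.ncard) : range f = S ∧ Injective f := by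
  have hrange : (range f).ncard ≤ Nat.card ι := by
    rw [← image_univ, ← ncard_univ]
    exact ncard_image_le
  have hSf : S.ncard ≤ (range f).ncard := ncard_le_ncard hS
  refine ⟨(eq_of_subset_of_ncard_le hS (hrange.trans hcard)).symm, ?_⟩
  rw [← injOn_univ]
  refine injOn_of_ncard_image_eq ?_
  rw [image_univ, ncard_univ]
  omega

lemma Function.Injective.bijOn_invFun_range {α β : Type*} [Nonempty α] {g : α → β}
    (hg : Injective g) : BijOn (invFun g) (range g) univ :=
  BijOn.symm (f := g) ⟨fun _ hy => invFun_eq hy, fun x _ => leftInverse_invFun hg x⟩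
    ⟨fun x _ => mem_range_self x, hg.injOn, image_univ.ge⟩

section Composition

variable {n : ℕ}

lemma glue_le {τ ρ : Setoid (DVert n)} {s : Setoid (TVert n)}
    (hρ : ∀ a b, ρ a b → s (embBot n a) (embBot n b))
    (hτ : ∀ a b, τ a b → s (embTop n a) (embTop n b)) : glue n τ ρ ≤ s :=
  Setoid.eqvGen_le fun _ _ => by
    rintro (⟨a, b, h, rfl, rfl⟩ | ⟨a, b, h, rfl, rfl⟩)
    exacts [hρ a b h, hτ a b h]

lemma pcomp_rel_inl_of_rel (τ : Setoid (DVert n)) {ρ : Setoid (DVert n)} {a b : Fin n}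
    (h : ρ (.inl a) (.inl b)) : pcomp n τ ρ (.inl a) (.inl b) :=
  EqvGen.rel _ _ (Or.inl ⟨_, _, h, rfl, rfl⟩)

lemma pcomp_rel_inr_of_rel {τ : Setoid (DVert n)} (ρ : Setoid (DVert n)) {a b : Fin n}
    (h : τ (.inr a) (.inr b)) : pcomp n τ ρ (.inr a) (.inr b) :=
  EqvGen.rel _ _ (Or.inr ⟨_, _, h, rfl, rfl⟩)

lemma ccount_eq_zero_of_forall_rel_inl (τ : Setoid (DVert n)) {ρ : Setoid (DVert n)}
    (hρ : ∀ j, ∃ i, ρ (.inr j) (.inl i)) : ccount n τ ρ = 0 := by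
  rw [ccount, ncard_eq_zero, eq_empty_iff_forall_notMem]
  rintro _ ⟨⟨y, rfl⟩, hmiddle⟩
  rcases y with i | j | j
  · simpa [isMiddle] using hmiddle _ ((glue n τ ρ).refl _)
  · obtain ⟨i, hi⟩ := hρ j
    have hglue : glue n τ ρ (.inl i) (.inr (.inl j)) :=
      (glue n τ ρ).symm' (EqvGen.rel _ _ (Or.inl ⟨_, _, hi, rfl, rfl⟩))
    simpa [isMiddle] using hmiddle _ hglue
  · simpa [isMiddle] using hmiddle _ ((glue n τ ρ).refl _)

end Composition

lemma pstar_tauP (n k : ℕ) : pstar n (tauP n k) = tauP n k :=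
  Setoid.ext fun x y => by rcases x with _ | _ <;> rcases y with _ | _ <;> rfl

section PermDiagram

variable {n k : ℕ}

def clip (hk : 1 ≤ k) (i : Fin n) : Fin k := ⟨min i (k - 1), by omega⟩

lemma clip_castLE (hk : 1 ≤ k) (hkn : k ≤ n) (c : Fin k) : clip hk (Fin.castLE hkn c) = c := by
  ext
  simp only [clip, Fin.val_castLE]
  omega

def permLabel (hk : 1 ≤ k) (π : Equiv.Perm (Fin k)) : DVert n → Fin k :=
  Sum.elim (clip hk) (fun j => π⁻¹ (clip hk j))

/-- Part `c` of this diagram is `clip⁻¹ c ∪ (clip⁻¹ (π c))'`, where `clip` collapses all indices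
`≥ k - 1` to `k - 1`. -/
def permDiagram (hk : 1 ≤ k) (π : Equiv.Perm (Fin k)) : Setoid (DVert n) :=
  Setoid.ker (permLabel hk π)

lemma permDiagram_rel_iff (hk : 1 ≤ k) (π : Equiv.Perm (Fin k)) {x y : DVert n} :
    permDiagram hk π x y ↔ permLabel hk π x = permLabel hk π y :=
  Setoid.ker_def

lemma tauP_eq_permDiagram_one (hk : 1 ≤ k) : tauP n k = permDiagram hk 1 := by
  ext x y
  change _ ∨ _ ↔ _
  rw [permDiagram_rel_iff]
  rcases x with i | i <;> rcases y with j | j <;>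
    simp only [permLabel, clip, vidx, Sum.elim_inl, Sum.elim_inr, inv_one, Equiv.Perm.coe_one,
      id_eq, Fin.mk.injEq] <;> omega

lemma permLabel_castLE_inl (hk : 1 ≤ k) (hkn : k ≤ n) (π : Equiv.Perm (Fin k)) (c : Fin k) :
    permLabel hk π (.inl (Fin.castLE hkn c)) = c :=
  clip_castLE hk hkn c

lemma permLabel_castLE_inr (hk : 1 ≤ k) (hkn : k ≤ n) (π : Equiv.Perm (Fin k)) (c : Fin k) :
    permLabel hk π (.inr (Fin.castLE hkn (π c))) = c := by
  simp [permLabel, clip_castLE]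

lemma permDiagram_injective (hk : 1 ≤ k) (hkn : k ≤ n) :
    Injective (permDiagram (n := n) hk) := by
  intro π σ h
  ext c : 1
  have hrel : permDiagram hk π (.inl (Fin.castLE hkn c)) (.inr (Fin.castLE hkn (π c))) := by
    rw [permDiagram_rel_iff, permLabel_castLE_inl, permLabel_castLE_inr]
  rw [h, permDiagram_rel_iff, permLabel_castLE_inl] at hrel
  simpa [permLabel, clip_castLE, Equiv.eq_symm_apply, eq_comm] using hrel

lemma prank_permDiagram (hk : 1 ≤ k) (hkn : k ≤ n) (π : Equiv.Perm (Fin k)) :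
    prank n (permDiagram hk π) = k := by
  set ρ := permDiagram (n := n) hk π
  set cls : Fin k → Set (DVert n) := fun c => {x | ρ x (.inl (Fin.castLE hkn c))}
  have hcls_inj : Injective cls := fun b b' h => by
    simpa [ρ, permDiagram_rel_iff, permLabel_castLE_inl] using (ρ.setOf_rel_eq_iff).mp h
  have hprop : {C ∈ ρ.classes | IsPropagating C} = range cls := by
    ext C
    constructor
    · rintro ⟨⟨y, rfl⟩, -⟩
      refine ⟨permLabel hk π y, (ρ.setOf_rel_eq_iff).mpr ?_⟩
      rw [permDiagram_rel_iff, permLabel_castLE_inl]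
    · rintro ⟨c, rfl⟩
      refine ⟨ρ.mem_classes _, ⟨_, ρ.refl _⟩, ⟨Fin.castLE hkn (π c), ?_⟩⟩
      change ρ _ _
      rw [permDiagram_rel_iff, permLabel_castLE_inl, permLabel_castLE_inr]
  rw [prank, hprop, ncard_range_of_injective hcls_inj, Nat.card_fin]

lemma pcomp_permDiagram (hk : 1 ≤ k) (hkn : k ≤ n) (π σ : Equiv.Perm (Fin k)) :
    pcomp n (permDiagram hk π) (permDiagram hk σ) = permDiagram hk (π * σ) := by
  set χ := glue n (permDiagram hk π) (permDiagram hk σ)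
  -- the bottom and middle rows keep their `σ`-labels, the top row is relabelled through `σ⁻¹`
  set F : TVert n → Fin k :=
    Sum.elim (clip hk) (Sum.elim (fun i => σ⁻¹ (clip hk i)) (fun j => σ⁻¹ (π⁻¹ (clip hk j))))
  have hχ : χ ≤ Setoid.ker F := glue_le
    (fun a b h => by rcases a with _ | _ <;> rcases b with _ | _ <;> exact h)
    (fun a b h => by rcases a with _ | _ <;> rcases b with _ | _ <;> exact congrArg (⇑σ⁻¹) h)
  have hmiddle (z : DVert n) :
      χ (embOut n z) (.inr (.inl (Fin.castLE hkn (σ (permLabel hk (π * σ) z))))) := by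
    refine EqvGen.rel _ _ ?_
    rcases z with i | j
    · exact Or.inl ⟨.inl i, .inr _, by simp [permDiagram_rel_iff, permLabel, clip_castLE], rfl, rfl⟩
    · refine Or.inr ⟨.inr j, .inl _, ?_, rfl, rfl⟩
      simp [permDiagram_rel_iff, permLabel, clip_castLE, Equiv.Perm.mul_apply]
  ext x y
  rw [permDiagram_rel_iff]
  constructor
  · intro h
    have hF := hχ h
    rw [Setoid.ker_def] at hF
    rcases x with _ | _ <;> rcases y with _ | _ <;> simpa [F, permLabel, embOut] using hF
  · intro h
    exact χ.trans (hmiddle x) (h ▸ χ.symm (hmiddle y))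

lemma ccount_permDiagram_one (hk : 1 ≤ k) :
    ccount n (permDiagram hk 1) (permDiagram hk 1) = 0 :=
  ccount_eq_zero_of_forall_rel_inl _ fun j => ⟨j, by simp [permDiagram_rel_iff, permLabel]⟩

end PermDiagram

section FixedByTau

variable {n k : ℕ}

lemma rel_inl_castLE_clip_of_pcomp_tauP (hk : 1 ≤ k) (hkn : k ≤ n) {ρ : Setoid (DVert n)}
    (h : pcomp n ρ (tauP n k) = ρ) (i : Fin n) :
    ρ (.inl i) (.inl (Fin.castLE hkn (clip hk i))) := by
  rw [← h]
  refine pcomp_rel_inl_of_rel ρ ?_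
  rw [tauP_eq_permDiagram_one hk, permDiagram_rel_iff, permLabel_castLE_inl]
  rfl

lemma rel_inr_castLE_clip_of_pcomp_tauP (hk : 1 ≤ k) (hkn : k ≤ n) {ρ : Setoid (DVert n)}
    (h : pcomp n (tauP n k) ρ = ρ) (j : Fin n) :
    ρ (.inr j) (.inr (Fin.castLE hkn (clip hk j))) := by
  rw [← h]
  refine pcomp_rel_inr_of_rel ρ ?_
  rw [tauP_eq_permDiagram_one hk, permDiagram_rel_iff]
  simp [permLabel, clip_castLE]

lemma exists_eq_permDiagram_of_mem_Hset (hk : 1 ≤ k) (hkn : k ≤ n) {ρ : Setoid (DVert n)}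
    (hρ : ρ ∈ Hset n k (tauP n k)) : ∃ π, ρ = permDiagram hk π := by
  obtain ⟨hrank, hleft, hright⟩ := hρ
  set L : Fin k → DVert n := fun c => .inl (Fin.castLE hkn c)
  set R : Fin k → DVert n := fun c => .inr (Fin.castLE hkn c)
  have hL := rel_inl_castLE_clip_of_pcomp_tauP hk hkn hright
  have hR := rel_inr_castLE_clip_of_pcomp_tauP hk hkn hleft
  set P := {C ∈ ρ.classes | IsPropagating C}
  have hcard : Nat.card (Fin k) ≤ P.ncard := by rw [Nat.card_fin]; exact hrank.ge
  have hPL : P ⊆ range fun c => {x | ρ x (L c)} := by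
    rintro C ⟨hC, ⟨i, hi⟩, -⟩
    exact ⟨clip hk i, (Setoid.eq_of_mem_classes hC hi (ρ.mem_classes _) (hL i)).symm⟩
  have hPR : P ⊆ range fun c => {x | ρ x (R c)} := by
    rintro C ⟨hC, -, ⟨j, hj⟩⟩
    exact ⟨clip hk j, (Setoid.eq_of_mem_classes hC hj (ρ.mem_classes _) (hR j)).symm⟩
  obtain ⟨hLP, hLinj⟩ := range_eq_and_injective_of_subset_range hPL hcard
  obtain ⟨hRP, hRinj⟩ := range_eq_and_injective_of_subset_range hPR hcard
  set π : Equiv.Perm (Fin k) := (Equiv.ofInjective _ hLinj).trans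
    ((Equiv.setCongr (hLP.trans hRP.symm)).trans (Equiv.ofInjective _ hRinj).symm)
  have hπ (c : Fin k) : ρ (L c) (R (π c)) := by
    rw [← ρ.setOf_rel_eq_iff]
    exact (Equiv.apply_ofInjective_symm hRinj
      (Equiv.setCongr (hLP.trans hRP.symm) (Equiv.ofInjective _ hLinj c))).symm
  refine ⟨π, ρ.eq_ker_of_rel_section (permLabel hk π) L ?_
    fun b b' h => hLinj ((ρ.setOf_rel_eq_iff).mpr h)⟩
  rintro (i | j)
  · exact hL i
  · have hπj := hπ (π⁻¹ (clip hk j))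
    rw [Equiv.Perm.coe_inv, Equiv.apply_symm_apply] at hπj
    exact ρ.trans (hR j) (ρ.symm hπj)

lemma Hset_tauP_eq_range_permDiagram (hk : 1 ≤ k) (hkn : k ≤ n) :
    Hset n k (tauP n k) = range (permDiagram (n := n) hk) := by
  ext ρ
  constructor
  · intro hρ
    obtain ⟨π, rfl⟩ := exists_eq_permDiagram_of_mem_Hset hk hkn hρ
    exact mem_range_self π
  · rintro ⟨π, rfl⟩
    refine ⟨prank_permDiagram hk hkn π, ?_, ?_⟩
    · rw [tauP_eq_permDiagram_one hk, pcomp_permDiagram hk hkn, one_mul]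
    · rw [tauP_eq_permDiagram_one hk, pcomp_permDiagram hk hkn, mul_one]

end FixedByTau

/-- the diagram `τ = {1,1'} ∪ ⋯ ∪ {k-1,(k-1)'} ∪ {k,…,n,k',…,n'}` satisfies
`τ = τ⋆`, `τ∘τ = τ`, `c(τ,τ) = 0`, and the set `H` of rank-`k` diagrams `ρ` with
`τ∘ρ = ρ = ρ∘τ` is a group under `∘` isomorphic to `S_k`, with identity element `τ`. -/
theorem tauP_group (n k : ℕ) (hk1 : 1 ≤ k) (hkn : k ≤ n) :
    pstar n (tauP n k) = tauP n k ∧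
    pcomp n (tauP n k) (tauP n k) = tauP n k ∧
    ccount n (tauP n k) (tauP n k) = 0 ∧
    tauP n k ∈ Hset n k (tauP n k) ∧
    ∃ f : Setoid (DVert n) → Equiv.Perm (Fin k),
      Set.BijOn f (Hset n k (tauP n k)) Set.univ ∧
      f (tauP n k) = 1 ∧
      ∀ ρ₁ ∈ Hset n k (tauP n k), ∀ ρ₂ ∈ Hset n k (tauP n k),
        pcomp n ρ₁ ρ₂ ∈ Hset n k (tauP n k) ∧
        f (pcomp n ρ₁ ρ₂) = f ρ₁ * f ρ₂ := by
  have hinj := permDiagram_injective (n := n) hk1 hkn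
  have hinv (π : Equiv.Perm (Fin k)) : invFun (permDiagram hk1) (permDiagram hk1 π) = π :=
    leftInverse_invFun hinj π
  refine ⟨pstar_tauP n k, ?_⟩
  rw [Hset_tauP_eq_range_permDiagram hk1 hkn, tauP_eq_permDiagram_one hk1]
  refine ⟨by rw [pcomp_permDiagram hk1 hkn, mul_one], ccount_permDiagram_one hk1,
    mem_range_self 1, invFun (permDiagram hk1), hinj.bijOn_invFun_range, hinv 1, ?_⟩
  rintro _ ⟨π₁, rfl⟩ _ ⟨π₂, rfl⟩
  rw [pcomp_permDiagram hk1 hkn]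
  exact ⟨mem_range_self _, by rw [hinv, hinv, hinv]⟩

end
end

section
/- Two diagrams τ, ρ in the partition monoid Pₙ are left equivalent (their restrictions to n̄ coincide and they have the same right parts) if and only if the left ideals they generate in the partition algebra 𝐏ₙ(δ) coincide: 𝐏ₙ τ = 𝐏ₙ ρ (for δ ≠ 0). -/
open scoped Classical
open Relation
noncomputable section

/-!
Because `δ ≠ 0`, the left ideal `𝐏ₙ τ` is the span of the diagrams `ν ∘ τ`, so the two ideals
coincide iff `τ` and `ρ` have the same left multiples in `Pₙ`. Left multiples are recognised
combinatorially: `m = ν ∘ τ` for some `ν` iff the restriction of `m` to `n̄` is coarser than that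
of `τ` and every right part of `τ` is a part of `m`. Necessity holds because gluing on top never
reaches a right part of `τ`. For sufficiency, `ν` is the kernel of a labelling of the middle and
top rows by `m`-parts: a middle point gets the `m`-part of `n̄` that its `τ`-part reaches. Finally,
applying the characterisation to `m = τ` and `m = ρ` shows that the left multiples determine the
restriction to `n̄` and the right parts.
-/

section Glue

variable {n : ℕ} {τ ρ : Setoid (DVert n)}

theorem embTop_eq (x : DVert n) : embTop n x = Sum.inr x := by
  cases x <;> rfl

theorem glue_bot {a b : DVert n} (h : ρ.r a b) : (glue n τ ρ).r (embBot n a) (embBot n b) :=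
  EqvGen.rel _ _ (Or.inl ⟨a, b, h, rfl, rfl⟩)

theorem glue_top {a b : DVert n} (h : τ.r a b) : (glue n τ ρ).r (embTop n a) (embTop n b) :=
  EqvGen.rel _ _ (Or.inr ⟨a, b, h, rfl, rfl⟩)

theorem glue_ind {β : Type*} (q : TVert n → β)
    (hbot : ∀ a b, ρ.r a b → q (embBot n a) = q (embBot n b))
    (htop : ∀ a b, τ.r a b → q (embTop n a) = q (embTop n b))
    {x y : TVert n} (h : (glue n τ ρ).r x y) : q x = q y :=
  Setoid.eqvGen_le (s := Setoid.ker q)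
    (by rintro _ _ (⟨a, b, hab, rfl, rfl⟩ | ⟨a, b, hab, rfl, rfl⟩)
        exacts [hbot a b hab, htop a b hab]) h

end Glue

section LeftDominated

variable {n : ℕ}

def rightParts (σ : Setoid (DVert n)) : Set (Set (DVert n)) :=
  {C | C ∈ σ.classes ∧ C ⊆ Set.range Sum.inl}

/-- Green's preorder `m ≤_L τ` of the partition monoid, in combinatorial form. -/
def LeftDominated (m τ : Setoid (DVert n)) : Prop :=
  (∀ i j : Fin n, τ.r (Sum.inl i) (Sum.inl j) → m.r (Sum.inl i) (Sum.inl j)) ∧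
    rightParts τ ⊆ m.classes

variable {m τ : Setoid (DVert n)}

theorem leftDominated_refl (τ : Setoid (DVert n)) : LeftDominated τ τ :=
  ⟨fun _ _ => id, fun _ hC => hC.1⟩

theorem LeftDominated.rightParts_subset (h : LeftDominated m τ) : rightParts τ ⊆ rightParts m :=
  fun _ hC => ⟨h.2 hC, hC.2⟩

theorem LeftDominated.rel_of_mem_rightParts (h : LeftDominated m τ) {x y : DVert n}
    (hx : {z | τ.r z x} ∈ rightParts τ) (hxy : m.r y x) : τ.r y x := by
  have hC : {z | τ.r z x} = {z | m.r z x} :=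
    Setoid.eq_of_mem_classes (h.2 hx) (τ.refl' x) (m.mem_classes x) (m.refl' x)
  exact (Set.ext_iff.mp hC y).mpr hxy

theorem pcomp_rel_inl {ν : Setoid (DVert n)} {i j : Fin n} (h : τ.r (Sum.inl i) (Sum.inl j)) :
    (pcomp n ν τ).r (Sum.inl i) (Sum.inl j) :=
  glue_bot h

theorem rightParts_subset_classes_pcomp (ν τ : Setoid (DVert n)) :
    rightParts τ ⊆ (pcomp n ν τ).classes := by
  rintro _ ⟨⟨x, rfl⟩, hsub⟩
  obtain ⟨i, rfl⟩ := hsub (τ.refl' x)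
  refine ⟨Sum.inl i, Set.ext fun y => ⟨fun hy => ?_, fun hy => ?_⟩⟩
  · obtain ⟨j, rfl⟩ := hsub hy
    exact pcomp_rel_inl hy
  · -- the part of `inl i` never reaches the middle row, so gluing cannot enlarge it
    have hbot : (embBot n).Injective := by
      rintro (a | a) (b | b) h <;> simp_all [embBot]
    have htop : ∀ a, embTop n a ∉ embBot n '' {z | τ.r z (Sum.inl i)} := by
      rintro a ⟨z, hz, he⟩
      obtain ⟨k, rfl⟩ := hsub hz
      simp [embTop_eq, embBot] at he
    have key := glue_ind (τ := ν) (fun u => u ∈ embBot n '' {z | τ.r z (Sum.inl i)})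
      (fun a b hab => by
        simp only [hbot.mem_set_image, Set.mem_ofPred_eq]
        exact propext ⟨τ.trans' (τ.symm' hab), τ.trans' hab⟩)
      (fun a b _ => propext (iff_of_false (htop a) (htop b))) hy
    obtain ⟨z, hz, he⟩ : embOut n y ∈ embBot n '' {z | τ.r z (Sum.inl i)} :=
      key ▸ ⟨Sum.inl i, τ.refl' _, rfl⟩
    cases y with
    | inl j => exact (hbot (a₂ := Sum.inl j) he) ▸ hz
    | inr j =>
      obtain ⟨k, rfl⟩ := hsub hz
      simp [embBot, embOut] at he

end LeftDominated

section Cofactor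

variable {n : ℕ} {m τ : Setoid (DVert n)}

/-- The vertices of `τ`, as the bottom factor of a product `ν ∘ τ = m`, labelled by the part of
the product they end up in. -/
def botLabel (m τ : Setoid (DVert n)) (a : DVert n) : Quotient m ⊕ Quotient τ :=
  if h : ∃ k, τ.r a (Sum.inl k) then Sum.inl (Quotient.mk m (Sum.inl h.choose))
  else Sum.inr (Quotient.mk τ a)

/-- The labels of the middle row (`inl`) and of the top row (`inr`) of a product `ν ∘ τ`. -/
def topLabel (m τ : Setoid (DVert n)) : DVert n → Quotient m ⊕ Quotient τ :=
  Sum.elim (fun i => botLabel m τ (Sum.inr i)) (fun j => Sum.inl (Quotient.mk m (Sum.inr j)))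

def leftCofactor (m τ : Setoid (DVert n)) : Setoid (DVert n) :=
  Setoid.ker (topLabel m τ)

theorem botLabel_of_rel (h : LeftDominated m τ) {a : DVert n} {k : Fin n}
    (hk : τ.r a (Sum.inl k)) : botLabel m τ a = Sum.inl (Quotient.mk m (Sum.inl k)) := by
  have hex : ∃ k, τ.r a (Sum.inl k) := ⟨k, hk⟩
  rw [botLabel, dif_pos hex]
  exact congrArg Sum.inl (Quotient.sound (h.1 _ _ (τ.trans' (τ.symm' hex.choose_spec) hk)))

theorem botLabel_congr (h : LeftDominated m τ) {a b : DVert n} (hab : τ.r a b) :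
    botLabel m τ a = botLabel m τ b := by
  by_cases ha : ∃ k, τ.r a (Sum.inl k)
  · obtain ⟨k, hk⟩ := ha
    rw [botLabel_of_rel h hk, botLabel_of_rel h (τ.trans' (τ.symm' hab) hk)]
  · have hb : ¬ ∃ k, τ.r b (Sum.inl k) := fun ⟨k, hk⟩ => ha ⟨k, τ.trans' hab hk⟩
    rw [botLabel, botLabel, dif_neg ha, dif_neg hb]
    exact congrArg Sum.inr (Quotient.sound hab)

theorem rel_of_pcomp_leftCofactor_rel (h : LeftDominated m τ) {x y : DVert n}
    (hxy : (pcomp n (leftCofactor m τ) τ).r x y) : m.r x y := by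
  have hout : ∀ z : DVert n, Sum.elim (fun i => botLabel m τ (Sum.inl i)) (topLabel m τ)
      (embOut n z) = Sum.inl (Quotient.mk m z) := by
    rintro (i | j)
    exacts [botLabel_of_rel h (τ.refl' _), rfl]
  have key := glue_ind (Sum.elim (fun i => botLabel m τ (Sum.inl i)) (topLabel m τ))
    (fun a b hab => by cases a <;> cases b <;> exact botLabel_congr h hab)
    (fun a b hab => by rw [embTop_eq, embTop_eq]; exact hab) hxy
  rw [hout, hout] at key
  exact Quotient.exact (Sum.inl_injective key)

theorem glue_embOut_of_mem_rightParts (h : LeftDominated m τ) (ν : Setoid (DVert n))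
    {x y : DVert n} (hx : {z | τ.r z x} ∈ rightParts τ) (hxy : m.r y x) :
    (glue n ν τ).r (embOut n y) (embOut n x) := by
  have hyx := h.rel_of_mem_rightParts hx hxy
  obtain ⟨i, rfl⟩ := hx.2 (τ.refl' x)
  obtain ⟨j, rfl⟩ := hx.2 hyx
  exact glue_bot hyx

theorem exists_glue_embOut_embTop (h : LeftDominated m τ) (ν : Setoid (DVert n)) (x : DVert n) :
    (∃ z, (glue n ν τ).r (embOut n x) (embTop n z) ∧
      topLabel m τ z = Sum.inl (Quotient.mk m x)) ∨ {y | τ.r y x} ∈ rightParts τ := by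
  rcases x with i | j
  · by_cases hk : ∃ k, τ.r (Sum.inl i) (Sum.inr k)
    · obtain ⟨k, hk⟩ := hk
      exact Or.inl ⟨Sum.inl k, glue_bot hk, botLabel_of_rel h (τ.symm' hk)⟩
    · refine Or.inr ⟨τ.mem_classes _, ?_⟩
      rintro (j | k) hy
      exacts [⟨j, rfl⟩, (hk ⟨k, τ.symm' hy⟩).elim]
  · exact Or.inl ⟨Sum.inr j, (glue n ν τ).refl' _, rfl⟩

theorem pcomp_leftCofactor_rel_of_rel (h : LeftDominated m τ) {x y : DVert n} (hxy : m.r x y) :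
    (pcomp n (leftCofactor m τ) τ).r x y := by
  rcases exists_glue_embOut_embTop h (leftCofactor m τ) x with ⟨zx, hx, lx⟩ | hx
  · rcases exists_glue_embOut_embTop h (leftCofactor m τ) y with ⟨zy, hy, ly⟩ | hy
    · have hz : (leftCofactor m τ).r zx zy := by
        rw [leftCofactor, Setoid.ker_def, lx, ly, Quotient.sound hxy]
      exact (glue n _ τ).trans' ((glue n _ τ).trans' hx (glue_top hz)) ((glue n _ τ).symm' hy)
    · exact glue_embOut_of_mem_rightParts h _ hy hxy
  · exact (glue n _ τ).symm' (glue_embOut_of_mem_rightParts h _ hx (m.symm' hxy))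

theorem pcomp_leftCofactor (h : LeftDominated m τ) : pcomp n (leftCofactor m τ) τ = m :=
  Setoid.ext fun _ _ => ⟨rel_of_pcomp_leftCofactor_rel h, pcomp_leftCofactor_rel_of_rel h⟩

end Cofactor

theorem exists_pcomp_eq_iff_leftDominated {n : ℕ} {m τ : Setoid (DVert n)} :
    (∃ ν, pcomp n ν τ = m) ↔ LeftDominated m τ := by
  refine ⟨?_, fun h => ⟨_, pcomp_leftCofactor h⟩⟩
  rintro ⟨ν, rfl⟩
  exact ⟨fun _ _ => pcomp_rel_inl, rightParts_subset_classes_pcomp ν τ⟩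

theorem leftDominated_iff_leftDominated {n : ℕ} {τ ρ : Setoid (DVert n)} :
    (∀ m, LeftDominated m τ ↔ LeftDominated m ρ) ↔
      (∀ i j : Fin n, τ.r (Sum.inl i) (Sum.inl j) ↔ ρ.r (Sum.inl i) (Sum.inl j)) ∧
        rightParts τ = rightParts ρ := by
  constructor
  · intro H
    have hρτ : LeftDominated ρ τ := (H ρ).2 (leftDominated_refl ρ)
    have hτρ : LeftDominated τ ρ := (H τ).1 (leftDominated_refl τ)
    exact ⟨fun i j => ⟨hρτ.1 i j, hτρ.1 i j⟩,
      hρτ.rightParts_subset.antisymm hτρ.rightParts_subset⟩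
  · rintro ⟨hres, hparts⟩ m
    simp only [LeftDominated, hres, hparts]

theorem range_pcomp_eq_iff {n : ℕ} {τ ρ : Setoid (DVert n)} :
    Set.range (pcomp n · τ) = Set.range (pcomp n · ρ) ↔
      (∀ i j : Fin n, τ.r (Sum.inl i) (Sum.inl j) ↔ ρ.r (Sum.inl i) (Sum.inl j)) ∧
        rightParts τ = rightParts ρ := by
  rw [← leftDominated_iff_leftDominated, Set.ext_iff]
  simp only [Set.mem_range, exists_pcomp_eq_iff_leftDominated]

theorem Finsupp.supported_injective {α M R : Type*} [Semiring R] [AddCommMonoid M] [Module R M]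
    [Nontrivial M] : Function.Injective (Finsupp.supported M R : Set α → Submodule R (α →₀ M)) := by
  intro s t hst
  obtain ⟨b, hb⟩ := exists_ne (0 : M)
  have hmem : ∀ (u : Set α) (a : α), Finsupp.single a b ∈ Finsupp.supported M R u ↔ a ∈ u :=
    fun u a => by simp [Finsupp.mem_supported, Finsupp.support_single a hb]
  ext a
  rw [← hmem s, ← hmem t, hst]

section Algebra

variable {n : ℕ}

theorem pmul_single_right (δ : ℂ) (x : Setoid (DVert n) →₀ ℂ) (τ : Setoid (DVert n)) :
    pmul n δ x (Finsupp.single τ 1) =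
      x.sum fun ν a => Finsupp.single (pcomp n ν τ) (δ ^ ccount n ν τ * a) := by
  unfold pmul
  refine Finsupp.sum_congr fun ν _ => ?_
  rw [Finsupp.sum_single_index] <;> simp

theorem span_pmul_single_eq_supported {δ : ℂ} (hδ : δ ≠ 0) (τ : Setoid (DVert n)) :
    Submodule.span ℂ (Set.range fun x => pmul n δ x (Finsupp.single τ 1)) =
      Finsupp.supported ℂ ℂ (Set.range (pcomp n · τ)) := by
  apply le_antisymm
  · rw [Submodule.span_le]
    rintro _ ⟨x, rfl⟩
    beta_reduce
    rw [SetLike.mem_coe, pmul_single_right]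
    exact Submodule.sum_mem _ fun ν _ => Finsupp.single_mem_supported ℂ _ ⟨ν, rfl⟩
  · rw [Finsupp.supported_eq_span_single, Submodule.span_le]
    rintro _ ⟨_, ⟨ν, rfl⟩, rfl⟩
    refine Submodule.subset_span ⟨Finsupp.single ν (δ ^ ccount n ν τ)⁻¹, ?_⟩
    beta_reduce
    rw [pmul_single_right, Finsupp.sum_single_index (by simp),
      mul_inv_cancel₀ (pow_ne_zero _ hδ)]

end Algebra

/-- two diagrams are left equivalent (same restriction to `n̄` and the same
right parts, i.e. parts contained in `n̄`) if and only if they generate the same left ideal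
of the partition algebra `𝐏ₙ(δ)`, `δ ≠ 0`. -/
theorem left_equiv_iff_left_ideal (n : ℕ) (δ : ℂ) (hδ : δ ≠ 0) (τ ρ : Setoid (DVert n)) :
    ((∀ i j : Fin n, τ.r (Sum.inl i) (Sum.inl j) ↔ ρ.r (Sum.inl i) (Sum.inl j)) ∧
      {C | C ∈ τ.classes ∧ C ⊆ Set.range Sum.inl} =
        {C | C ∈ ρ.classes ∧ C ⊆ Set.range Sum.inl}) ↔
    Submodule.span ℂ (Set.range fun x => pmul n δ x (Finsupp.single τ 1)) =
      Submodule.span ℂ (Set.range fun x => pmul n δ x (Finsupp.single ρ 1)) := by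
  rw [span_pmul_single_eq_supported hδ, span_pmul_single_eq_supported hδ,
    Finsupp.supported_injective.eq_iff]
  exact range_pcomp_eq_iff.symm

end
end
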